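/- arXiv:1612.04906 — 9 statements merged into one kernel-verified Lean document; each statement's English description precedes it below -/
import Mathlib

section
/- For any real number α and any positive integer N, the fractional parts {α}, {2α}, ..., {Nα} partition the circle ℝ/ℤ into intervals having at most three distinct lengths. -/
open Matrix Set

noncomputable section

/-- The lattice ℤ²M (row-vector convention). -/
def lat (M : Matrix.SpecialLinearGroup (Fin 2) ℝ) : Set (ℝ × ℝ) :=
  { p | ∃ m n : ℤ, p = ((m : ℝ) * M.1 0 0 + (n : ℝ) * M.1 1 0,
                        (m : ℝ) * M.1 0 1 + (n : ℝ) * M.1 1 1) }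

/-- The set { y > 0 : (x,y) ∈ ℤ²M, -t < x ≤ 1-t }. -/
def Fset (M : Matrix.SpecialLinearGroup (Fin 2) ℝ) (t : ℝ) : Set ℝ :=
  { y | 0 < y ∧ ∃ x : ℝ, (x, y) ∈ lat M ∧ -t < x ∧ x ≤ 1 - t }

/-- F(M,t) = min{ y > 0 : (x,y) ∈ ℤ²M, -t < x ≤ 1-t }. -/
noncomputable def F (M : Matrix.SpecialLinearGroup (Fin 2) ℝ) (t : ℝ) : ℝ :=
  sInf (Fset M t)

/-- The set of positive values (ℓ-k)α + n with 0 < ℓ ≤ N. -/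
def gapSet (α : ℝ) (N k : ℤ) : Set ℝ :=
  { v | 0 < v ∧ ∃ l n : ℤ, 0 < l ∧ l ≤ N ∧ v = ((l : ℝ) - (k : ℝ)) * α + (n : ℝ) }

/-- s_{k,N}: the gap from {kα} to its next neighbor among {α},...,{Nα}. -/
noncomputable def gap (α : ℝ) (N k : ℤ) : ℝ := sInf (gapSet α N k)

/-- The region A = (-1,1) × (0,∞). -/
def regA : Set (ℝ × ℝ) := Set.Ioo (-1 : ℝ) 1 ×ˢ Set.Ioi (0 : ℝ)
/-!
Write `ρ j = arcLen α j ∈ (0, 1]` for the length of the arc of `ℝ/ℤ` from `0` to `jα`. The gap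
after `kα` is the least `ρ j` over the window `1 - k ≤ j ≤ N - k`, which contains `0` and spans
`N` integers. Let `p` be the first minimiser of `ρ j` and `q` that of `ρ (-j)` on `1 ≤ j ≤ N -
1`, and put `P = ρ p`, `Q = ρ (-q)`. Since `ρ i < ρ j` forces `ρ j = ρ i + ρ (j - i)`, every `1
≤ j < p` has `ρ j ≥ P + Q`, and likewise `ρ (-i) ≥ P + Q` for `1 ≤ i < q`. So a window
containing `p` or `-q` has minimum `P`, `Q` or `min P Q`, and a window containing neither
contains `p - q`, where `ρ (p - q) ≤ P + Q`, and has minimum `P + Q` (here `p ≥ 2`, so `P < ρ 1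
≤ 1` and `Q ≤ ρ (-p) = 1 - P`).
-/

section IntervalMod

variable {G : Type*} [AddCommGroup G] [LinearOrder G] [IsOrderedAddMonoid G] [Archimedean G]
  {p : G} (hp : 0 < p)

theorem exists_toIocMod_zero_eq (b : G) : ∃ n : ℤ, toIocMod hp 0 b = b + n • p :=
  ⟨-toIocDiv hp 0 b, eq_add_of_sub_eq' (toIocMod_sub_self hp 0 b)⟩

theorem toIocMod_zero_le_add_zsmul {b : G} {n : ℤ} (h : 0 < b + n • p) :
    toIocMod hp 0 b ≤ b + n • p := by
  rcases le_or_gt (b + n • p) p with hle | hlt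
  · refine ((toIocMod_eq_iff hp).2 ⟨⟨h, by rwa [zero_add]⟩, -n, ?_⟩).le
    rw [neg_smul, add_neg_cancel_right]
  · exact (toIocMod_le_right hp 0 b).trans (by rw [zero_add]; exact hlt.le)

theorem toIocMod_zero_add_le (a b : G) :
    toIocMod hp 0 (a + b) ≤ toIocMod hp 0 a + toIocMod hp 0 b := by
  obtain ⟨m, hm⟩ := exists_toIocMod_zero_eq hp a
  obtain ⟨n, hn⟩ := exists_toIocMod_zero_eq hp b
  have hsum : toIocMod hp 0 a + toIocMod hp 0 b = a + b + (m + n) • p := by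
    rw [hm, hn, add_zsmul]; abel
  rw [hsum]
  exact toIocMod_zero_le_add_zsmul hp
    (hsum ▸ add_pos (toIocMod_mem_Ioc hp 0 a).1 (toIocMod_mem_Ioc hp 0 b).1)

theorem toIocMod_zero_sub {a b : G} (h : toIocMod hp 0 b < toIocMod hp 0 a) :
    toIocMod hp 0 (a - b) = toIocMod hp 0 a - toIocMod hp 0 b := by
  obtain ⟨m, hm⟩ := exists_toIocMod_zero_eq hp a
  obtain ⟨n, hn⟩ := exists_toIocMod_zero_eq hp b
  have ha := (toIocMod_mem_Ioc hp 0 a).2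
  have hb := (toIocMod_mem_Ioc hp 0 b).1
  rw [zero_add] at ha
  refine (toIocMod_eq_iff hp).2
    ⟨⟨sub_pos.2 h, by rw [zero_add]; exact (sub_le_self _ hb.le).trans ha⟩, n - m, ?_⟩
  rw [hm, hn, sub_zsmul]; abel

end IntervalMod

structure IsFirstMinOn {ι β : Type*} [LinearOrder ι] [Preorder β] (f : ι → β) (s : Set ι)
    (p : ι) : Prop where
  mem : p ∈ s
  le : ∀ j ∈ s, f p ≤ f j
  lt_of_lt : ∀ j ∈ s, j < p → f p < f j

theorem Set.Finite.exists_isFirstMinOn {ι β : Type*} [LinearOrder ι] [LinearOrder β]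
    {s : Set ι} (hs : s.Finite) (hne : s.Nonempty) (f : ι → β) : ∃ p, IsFirstMinOn f s p := by
  obtain ⟨p, hp, hmin⟩ :=
    hs.toFinset.exists_min_image (fun j => toLex (f j, j)) (hs.toFinset_nonempty.2 hne)
  simp only [Finite.mem_toFinset] at hp hmin
  refine ⟨p, ⟨hp, fun j hj => ?_, fun j hj hjp => ?_⟩⟩ <;>
    rcases Prod.Lex.le_iff.1 (hmin j hj) with h | h
  · exact h.le
  · exact h.1.le
  · exact h
  · exact absurd h.2 (not_le.2 hjp)

-- The arc length is taken in `(0, 1]`: it is `1`, not `0`, when `jα ∈ ℤ`.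
def arcLen (α : ℝ) (j : ℤ) : ℝ := toIocMod zero_lt_one 0 (j * α)

section ArcLen

variable {α : ℝ}

theorem arcLen_pos (j : ℤ) : 0 < arcLen α j := (toIocMod_mem_Ioc _ _ _).1

theorem arcLen_le_one (j : ℤ) : arcLen α j ≤ 1 :=
  (toIocMod_mem_Ioc _ _ _).2.trans_eq (zero_add 1)

theorem arcLen_zero : arcLen α 0 = 1 := by
  simp [arcLen, toIocMod_apply_left]

theorem exists_arcLen_eq (j : ℤ) : ∃ n : ℤ, arcLen α j = j * α + n := by
  simpa [arcLen] using exists_toIocMod_zero_eq zero_lt_one ((j : ℝ) * α)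

theorem arcLen_le {j n : ℤ} (h : 0 < j * α + n) : arcLen α j ≤ j * α + n := by
  simpa [arcLen] using
    toIocMod_zero_le_add_zsmul zero_lt_one (b := j * α) (n := n) (by simpa using h)

theorem arcLen_add_le (i j : ℤ) : arcLen α (i + j) ≤ arcLen α i + arcLen α j := by
  rw [arcLen, Int.cast_add, add_mul]; exact toIocMod_zero_add_le _ _ _

theorem arcLen_sub {i j : ℤ} (h : arcLen α i < arcLen α j) :
    arcLen α (j - i) = arcLen α j - arcLen α i := by
  rw [arcLen, Int.cast_sub, sub_mul]; exact toIocMod_zero_sub _ h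

end ArcLen

theorem gap_eq_of_bounds {α v : ℝ} {N k j₀ : ℤ} (hj₀ : 1 - k ≤ j₀ ∧ j₀ ≤ N - k)
    (hj₀v : arcLen α j₀ ≤ v) (hv : v ≤ 1)
    (hpos : ∀ j, 1 ≤ j → j ≤ N - k → v ≤ arcLen α j)
    (hneg : ∀ i, 1 ≤ i → i ≤ k - 1 → v ≤ arcLen α (-i)) :
    gap α N k = v := by
  have hlow : ∀ j, 1 - k ≤ j → j ≤ N - k → v ≤ arcLen α j := by
    intro j h1 h2
    rcases lt_trichotomy j 0 with hj | rfl | hj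
    · simpa using hneg (-j) (by omega) (by omega)
    · rwa [arcLen_zero]
    · exact hpos j hj h2
  obtain rfl : arcLen α j₀ = v := hj₀v.antisymm (hlow j₀ hj₀.1 hj₀.2)
  refine IsLeast.csInf_eq ⟨⟨arcLen_pos j₀, ?_⟩, ?_⟩
  · obtain ⟨n, hn⟩ := exists_arcLen_eq (α := α) j₀
    exact ⟨j₀ + k, n, by omega, by omega, by rw [hn]; push_cast; ring⟩
  · rintro w ⟨hw, l, n, hl, hlN, rfl⟩
    have hcast : ((l : ℝ) - k) * α + n = ((l - k : ℤ) : ℝ) * α + n := by push_cast; ring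
    rw [hcast] at hw ⊢
    exact (hlow (l - k) (by omega) (by omega)).trans (arcLen_le hw)

section FirstMinima

variable {α : ℝ} {N p q : ℤ}

theorem add_le_arcLen_of_lt_first (hp : IsFirstMinOn (arcLen α) (Icc 1 (N - 1)) p)
    (hq : IsFirstMinOn (fun i => arcLen α (-i)) (Icc 1 (N - 1)) q)
    {j : ℤ} (hj : 1 ≤ j) (hjp : j < p) :
    arcLen α p + arcLen α (-q) ≤ arcLen α j := by
  obtain ⟨-, hpN⟩ := hp.mem
  have hsub := arcLen_sub (hp.lt_of_lt j ⟨hj, by omega⟩ hjp)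
  have : arcLen α (-q) ≤ arcLen α (-(p - j)) := hq.le (p - j) ⟨by omega, by omega⟩
  rw [neg_sub, hsub] at this
  linarith

theorem add_le_arcLen_neg_of_lt_first (hp : IsFirstMinOn (arcLen α) (Icc 1 (N - 1)) p)
    (hq : IsFirstMinOn (fun i => arcLen α (-i)) (Icc 1 (N - 1)) q)
    {i : ℤ} (hi : 1 ≤ i) (hiq : i < q) :
    arcLen α p + arcLen α (-q) ≤ arcLen α (-i) := by
  obtain ⟨-, hqN⟩ := hq.mem
  have hsub := arcLen_sub (hq.lt_of_lt i ⟨hi, by omega⟩ hiq)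
  have := hp.le (q - i) ⟨by omega, by omega⟩
  rw [show q - i = -i - -q by ring, hsub] at this
  linarith

theorem add_le_one_of_one_lt (hp : IsFirstMinOn (arcLen α) (Icc 1 (N - 1)) p)
    (hq : IsFirstMinOn (fun i => arcLen α (-i)) (Icc 1 (N - 1)) q) (h1p : 1 < p) :
    arcLen α p + arcLen α (-q) ≤ 1 := by
  obtain ⟨-, hpN⟩ := hp.mem
  have hlt : arcLen α p < arcLen α 0 :=
    arcLen_zero (α := α) ▸ (hp.lt_of_lt 1 ⟨le_rfl, by omega⟩ h1p).trans_le (arcLen_le_one 1)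
  have hneg := arcLen_sub hlt
  rw [zero_sub, arcLen_zero] at hneg
  have : arcLen α (-q) ≤ arcLen α (-p) := hq.le p hp.mem
  linarith

theorem gap_mem_of_isFirstMinOn (hp : IsFirstMinOn (arcLen α) (Icc 1 (N - 1)) p)
    (hq : IsFirstMinOn (fun i => arcLen α (-i)) (Icc 1 (N - 1)) q) {k : ℤ} (hk : 1 ≤ k)
    (hkN : k ≤ N) :
    gap α N k ∈ ({arcLen α p, arcLen α (-q), arcLen α p + arcLen α (-q)} : Set ℝ) := by
  have ⟨hp1, hpN⟩ := hp.mem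
  have ⟨hq1, hqN⟩ := hq.mem
  have hP := arcLen_pos (α := α) p
  have hQ := arcLen_pos (α := α) (-q)
  by_cases hpk : p ≤ N - k <;> by_cases hqk : q ≤ k - 1
  · rcases le_total (arcLen α p) (arcLen α (-q)) with h | h
    · refine .inl (gap_eq_of_bounds (j₀ := p) (by omega) le_rfl (arcLen_le_one p)
        (fun j h1 h2 => hp.le j ⟨h1, by omega⟩) (fun i h1 h2 => ?_))
      exact h.trans (hq.le i ⟨h1, by omega⟩)
    · refine .inr (.inl (gap_eq_of_bounds (j₀ := -q) (by omega) le_rfl (arcLen_le_one _)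
        (fun j h1 h2 => ?_) (fun i h1 h2 => hq.le i ⟨h1, by omega⟩)))
      exact h.trans (hp.le j ⟨h1, by omega⟩)
  · refine .inl (gap_eq_of_bounds (j₀ := p) (by omega) le_rfl (arcLen_le_one p)
      (fun j h1 h2 => hp.le j ⟨h1, by omega⟩) (fun i h1 h2 => ?_))
    linarith [add_le_arcLen_neg_of_lt_first hp hq h1 (by omega : i < q)]
  · refine .inr (.inl (gap_eq_of_bounds (j₀ := -q) (by omega) le_rfl (arcLen_le_one _)
      (fun j h1 h2 => ?_) (fun i h1 h2 => hq.le i ⟨h1, by omega⟩)))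
    linarith [add_le_arcLen_of_lt_first hp hq h1 (by omega : j < p)]
  · refine .inr (.inr (gap_eq_of_bounds (j₀ := p + -q) (by omega) (arcLen_add_le p (-q))
      (add_le_one_of_one_lt hp hq (by omega))
      (fun j h1 h2 => add_le_arcLen_of_lt_first hp hq h1 (by omega))
      (fun i h1 h2 => add_le_arcLen_neg_of_lt_first hp hq h1 (by omega))))

end FirstMinima

theorem three_gap_general (α : ℝ) (N : ℤ) :
    {s : ℝ | ∃ k : ℤ, 1 ≤ k ∧ k ≤ N ∧ s = gap α N k}.ncard ≤ 3 := by
  rcases le_or_gt N 1 with hN | hN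
  · have hsub : {s : ℝ | ∃ k : ℤ, 1 ≤ k ∧ k ≤ N ∧ s = gap α N k} ⊆ {gap α N 1} := by
      rintro s ⟨k, hk, hkN, rfl⟩
      rw [show k = 1 by omega, mem_singleton_iff]
    exact (ncard_le_ncard hsub (finite_singleton _)).trans (by simp)
  obtain ⟨p, hp⟩ := (finite_Icc 1 (N - 1)).exists_isFirstMinOn (nonempty_Icc.2 (by omega))
    (arcLen α)
  obtain ⟨q, hq⟩ := (finite_Icc 1 (N - 1)).exists_isFirstMinOn (nonempty_Icc.2 (by omega))
    (fun i => arcLen α (-i))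
  have hsub : {s : ℝ | ∃ k : ℤ, 1 ≤ k ∧ k ≤ N ∧ s = gap α N k} ⊆
      {arcLen α p, arcLen α (-q), arcLen α p + arcLen α (-q)} := by
    rintro s ⟨k, hk, hkN, rfl⟩
    exact gap_mem_of_isFirstMinOn hp hq hk hkN
  refine (ncard_le_ncard hsub (toFinite _)).trans ?_
  rw [← Finset.coe_pair, ← Finset.coe_insert, ncard_coe_finset]
  exact Finset.card_le_three

/-- Three gap theorem: the gaps of {α},...,{Nα} on ℝ/ℤ take at most three
distinct lengths. -/
theorem three_gap (α : ℝ) (N : ℤ) (hN : 0 < N) :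
    {s : ℝ | ∃ k : ℤ, 1 ≤ k ∧ k ≤ N ∧ s = gap α N k}.ncard ≤ 3 :=
  three_gap_general α N
end
end

section
/- Let M ∈ SL(2,ℝ) and t ∈ (0,1]. Then the set { y > 0 : (x,y) ∈ ℤ²M, -t < x ≤ 1 - t } is nonempty, where ℤ²M = { (m,n)M : (m,n) ∈ ℤ² } with row-vector convention. -/
/-! The lattice points with `x ∈ (-t, 0]` and `y > 0` suffice. If `ℤ²M` has a nonzero point on the
`y`-axis, that point or its negative is one. Otherwise the first coordinates of `ℤ²M` form a
non-cyclic, hence dense, subgroup of `ℝ`. If no lattice point with `x ∈ (-t, 0)` had `y > 0`, then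
(negating) every lattice point with `x ∈ (0, t)` would have `y ≥ 0`. Fix such a point `q`; for a
lattice point `p` with `0 < x(p) < x(q) / k`, the point `q - k p` again has `x ∈ (0, t)`, so
`0 ≤ y(p) ≤ y(q) / k`. For large `k` this puts `p ≠ 0` in an arbitrarily small box, contradicting
discreteness. -/

open Matrix Set

noncomputable section

theorem AddSubgroup.exists_mem_fst_neg_snd_pos {L : AddSubgroup (ℝ × ℝ)} {δ : ℝ} (hδ : 0 < δ)
    (hdisc : ∀ p ∈ L, |p.1| < δ → |p.2| < δ → p = 0)
    (hfst : ∀ ε > 0, ∃ p ∈ L, 0 < p.1 ∧ p.1 < ε) {ε : ℝ} (hε : 0 < ε) :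
    ∃ p ∈ L, -ε < p.1 ∧ p.1 < 0 ∧ 0 < p.2 := by
  by_contra! h
  have hsnd : ∀ p ∈ L, 0 < p.1 → p.1 < ε → 0 ≤ p.2 := fun p hp h0 h1 => by
    simpa using h (-p) (L.neg_mem hp) (by simpa using h1) (by simpa using h0)
  obtain ⟨q, hq, hq0, hqε⟩ := hfst ε hε
  have hq2 := hsnd q hq hq0 hqε
  obtain ⟨k, hk⟩ := exists_nat_gt ((q.1 + q.2) / δ)
  have hk0 : (0 : ℝ) < k := lt_of_le_of_lt (by positivity) hk
  have hkδ : q.1 + q.2 < k * δ := (div_lt_iff₀ hδ).1 hk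
  obtain ⟨p, hp, hp0, hpq⟩ := hfst (q.1 / k) (by positivity)
  have hkp : k * p.1 < q.1 := (lt_div_iff₀' hk0).1 hpq
  have hk1 : (1 : ℝ) ≤ k := Nat.one_le_cast.2 (Nat.cast_pos.1 hk0)
  have hp2 : 0 ≤ p.2 := hsnd p hp hp0 (by nlinarith)
  have hkp2 : k * p.2 ≤ q.2 := by
    have := hsnd (q - k • p) (L.sub_mem hq (L.nsmul_mem hp k))
      (by simp only [nsmul_eq_mul, Prod.fst_sub, Prod.fst_mul, Prod.fst_natCast]; linarith)
      (by simp only [nsmul_eq_mul, Prod.fst_sub, Prod.fst_mul, Prod.fst_natCast]; nlinarith)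
    simpa only [nsmul_eq_mul, Prod.snd_sub, Prod.snd_mul, Prod.snd_natCast, sub_nonneg] using this
  have hp_zero : p = 0 :=
    hdisc p hp (by rw [abs_of_pos hp0]; nlinarith) (by rw [abs_of_nonneg hp2]; nlinarith)
  simp [hp_zero] at hp0

theorem Matrix.SpecialLinearGroup.det_fin_two_eq_one {R : Type*} [CommRing R]
    (M : Matrix.SpecialLinearGroup (Fin 2) R) :
    M.1 0 0 * M.1 1 1 - M.1 0 1 * M.1 1 0 = 1 := by
  have h := M.det_coe
  rwa [Matrix.det_fin_two] at h

def latSubgroup (M : Matrix.SpecialLinearGroup (Fin 2) ℝ) : AddSubgroup (ℝ × ℝ) where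
  carrier := lat M
  zero_mem' := ⟨0, 0, by simp [Prod.zero_eq_mk]⟩
  add_mem' := by
    rintro _ _ ⟨m, n, rfl⟩ ⟨m', n', rfl⟩
    exact ⟨m + m', n + n', by simp only [Prod.mk_add_mk, Int.cast_add]; congr 1 <;> ring⟩
  neg_mem' := by
    rintro _ ⟨m, n, rfl⟩
    exact ⟨-m, -n, by simp only [Prod.neg_mk, Int.cast_neg]; congr 1 <;> ring⟩

theorem exists_isolating_box_lat (M : Matrix.SpecialLinearGroup (Fin 2) ℝ) :
    ∃ δ > 0, ∀ p ∈ lat M, |p.1| < δ → |p.2| < δ → p = 0 := by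
  set S := |M.1 0 0| + |M.1 0 1| + |M.1 1 0| + |M.1 1 1|
  have hdet := Matrix.SpecialLinearGroup.det_fin_two_eq_one M
  refine ⟨1 / (S + 1), by positivity, ?_⟩
  rintro _ ⟨m, n, rfl⟩ hx hy
  set x := (m : ℝ) * M.1 0 0 + n * M.1 1 0
  set y := (m : ℝ) * M.1 0 1 + n * M.1 1 1
  have hδS : 1 / (S + 1) * S < 1 := by
    rw [div_mul_eq_mul_div, one_mul, div_lt_one (by positivity)]
    linarith
  -- the coefficients are recovered from the point by the inverse matrix
  have coeff_eq_zero (k : ℤ) (u v : ℝ) (hk : (k : ℝ) = x * u - y * v) (huv : |u| + |v| ≤ S) :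
      k = 0 := by
    have : |(k : ℝ)| < 1 :=
      calc |(k : ℝ)| ≤ |x| * |u| + |y| * |v| := by rw [hk, ← abs_mul, ← abs_mul]; exact abs_sub _ _
        _ ≤ 1 / (S + 1) * (|u| + |v|) := by
          rw [mul_add]; gcongr
        _ < 1 := lt_of_le_of_lt (by gcongr) hδS
    exact Int.abs_lt_one_iff.1 (by exact_mod_cast this)
  have hm := coeff_eq_zero m (M.1 1 1) (M.1 1 0) (by linear_combination -(m : ℝ) * hdet)
    (by simp only [S]; linarith [abs_nonneg (M.1 0 0), abs_nonneg (M.1 0 1)])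
  have hn := coeff_eq_zero n (-M.1 0 1) (-M.1 0 0) (by linear_combination -(n : ℝ) * hdet)
    (by simp only [S, abs_neg]; linarith [abs_nonneg (M.1 1 0), abs_nonneg (M.1 1 1)])
  simp [x, y, hm, hn, Prod.zero_eq_mk]

theorem exists_mem_lat_fst_pos_lt (M : Matrix.SpecialLinearGroup (Fin 2) ℝ)
    (hvert : ∀ p ∈ lat M, p.1 = 0 → p = 0) {ε : ℝ} (hε : 0 < ε) :
    ∃ p ∈ lat M, 0 < p.1 ∧ p.1 < ε := by
  have hdense : Dense ((latSubgroup M).map (AddMonoidHom.fst ℝ ℝ) : Set ℝ) := by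
    refine (AddSubgroup.dense_or_cyclic _).resolve_right ?_
    rintro ⟨g, hg⟩
    have hr₁ : (M.1 0 0, M.1 0 1) ∈ latSubgroup M := ⟨1, 0, by simp⟩
    have hr₂ : (M.1 1 0, M.1 1 1) ∈ latSubgroup M := ⟨0, 1, by simp⟩
    obtain ⟨z, hz⟩ : ∃ z : ℤ, z • g = M.1 0 0 := by
      rw [← AddSubgroup.mem_closure_singleton, ← hg]; exact ⟨_, hr₁, rfl⟩
    obtain ⟨w, hw⟩ : ∃ w : ℤ, w • g = M.1 1 0 := by
      rw [← AddSubgroup.mem_closure_singleton, ← hg]; exact ⟨_, hr₂, rfl⟩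
    -- `w r₁ - z r₂` lies on the `y`-axis, so it vanishes; but then `det M = g (z d - w b) = 0`
    have h0 := congrArg Prod.snd <| hvert _ ((latSubgroup M).sub_mem
      ((latSubgroup M).zsmul_mem hr₁ w) ((latSubgroup M).zsmul_mem hr₂ z))
      (by simp only [Prod.fst_sub, Prod.smul_fst, ← hz, ← hw, smul_smul, mul_comm, sub_self])
    simp only [Prod.smul_mk, zsmul_eq_mul, Prod.mk_sub_mk, Prod.snd_zero] at h0
    have hdet := Matrix.SpecialLinearGroup.det_fin_two_eq_one M
    rw [← hz, ← hw, zsmul_eq_mul, zsmul_eq_mul] at hdet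
    exact one_ne_zero (by linear_combination -hdet - g * h0 : (1 : ℝ) = 0)
  obtain ⟨_, ⟨p, hp, rfl⟩, h0, h1⟩ := hdense.exists_between hε
  exact ⟨p, hp, h0, h1⟩

/-- The set { y > 0 : (x,y) ∈ ℤ²M, -t < x ≤ 1-t } is nonempty. -/
theorem Fset_nonempty (M : Matrix.SpecialLinearGroup (Fin 2) ℝ) (t : ℝ)
    (ht : 0 < t) (ht1 : t ≤ 1) : (Fset M t).Nonempty := by
  suffices ∃ p ∈ lat M, -t < p.1 ∧ p.1 ≤ 0 ∧ 0 < p.2 by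
    obtain ⟨⟨x, y⟩, hp, h1, h2, h3⟩ := this
    exact ⟨y, h3, x, hp, h1, by linarith⟩
  by_cases hvert : ∃ p ∈ lat M, p.1 = 0 ∧ p ≠ 0
  · obtain ⟨p, hp, hp1, hp0⟩ := hvert
    have hp2 : p.2 ≠ 0 := fun h => hp0 (Prod.ext hp1 h)
    rcases hp2.lt_or_gt with hneg | hpos
    · exact ⟨-p, (latSubgroup M).neg_mem hp, by simp [hp1, ht], by simp [hp1], by simpa using hneg⟩
    · exact ⟨p, hp, by simp [hp1, ht], hp1.le, hpos⟩
  · push Not at hvert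
    obtain ⟨δ, hδ, hdisc⟩ := exists_isolating_box_lat M
    obtain ⟨p, hp, h1, h2, h3⟩ := AddSubgroup.exists_mem_fst_neg_snd_pos (L := latSubgroup M) hδ
      hdisc (fun _ hε => exists_mem_lat_fst_pos_lt M hvert hε) ht
    exact ⟨p, hp, h1, h2.le, h3⟩
end
end

section
/- Let L be a lattice in ℝ² of covolume 1, let A = (-1,1) × (0,∞), and suppose r = (r₁,r₂) ∈ A ∩ L has minimal second coordinate among points of A ∩ L, and s = (s₁,s₂) ∈ A ∩ L \ ℤr has minimal second coordinate among points of A ∩ L not on the line ℝr, with s₂ > r₂. Then the closed parallelogram with vertices 0, r, s, r+s contains no lattice points of L other than its vertices, and consequently {r, s} is a basis of L. -/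
open Matrix Set

noncomputable section

/-!
Since `r` is the lowest point of `A ∩ L`, no `t • r` with `0 < t < 1` lies in `L`; so `s`, not being
an integer multiple of `r`, is not a real multiple either, and every point is `a • r + b • s`. Suppose such a point `w` of `L`
has `0 ≤ a ≤ 1` and `0 < b < 1`. Replacing `w` by `r + s - w` if needed, `w` is lower than `s`.
If `w ∈ A` this contradicts the choice of `s`; otherwise `|w.1| ≥ 1` forces `r.1`, `s.1` to have
the sign of `w.1`, and then whichever of `w - r`, `s - w` is above the axis is a point of `A` off
`ℤr` lower than `s`. So `b ∈ {0, 1}`, and then `a • r ∈ L` gives `a ∈ {0, 1}`. Reducing the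
coefficients of a lattice point modulo `1` lands in the parallelogram, whence the basis.
-/

def latAddSubgroup (M : Matrix.SpecialLinearGroup (Fin 2) ℝ) : AddSubgroup (ℝ × ℝ) where
  carrier := lat M
  zero_mem' := ⟨0, 0, by ext <;> simp⟩
  add_mem' := by
    rintro _ _ ⟨m, n, rfl⟩ ⟨m', n', rfl⟩
    exact ⟨m + m', n + n', by push_cast; ext <;> simp <;> ring⟩
  neg_mem' := by
    rintro _ ⟨m, n, rfl⟩
    exact ⟨-m, -n, by push_cast; ext <;> simp <;> ring⟩

lemma mem_regA_iff {p : ℝ × ℝ} : p ∈ regA ↔ |p.1| < 1 ∧ 0 < p.2 := by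
  simp [regA, abs_lt, and_comm]

lemma abs_sub_lt_one_of_one_le_abs {x y a b : ℝ} (hx : |x| < 1) (hy : |y| < 1)
    (ha₀ : 0 ≤ a) (ha₁ : a ≤ 1) (hb₀ : 0 ≤ b) (hb₁ : b ≤ 1) (h : 1 ≤ |a * x + b * y|) :
    |a * x + b * y - x| < 1 ∧ |y - (a * x + b * y)| < 1 := by
  rw [abs_lt] at hx hy
  rw [abs_lt, abs_lt]
  rcases le_abs'.1 h with h | h <;> refine ⟨⟨?_, ?_⟩, ?_, ?_⟩ <;> nlinarith

section

variable {L : AddSubgroup (ℝ × ℝ)} {r s : ℝ × ℝ}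

lemma smul_notMem_of_pos_of_lt_one (hr : r ∈ regA)
    (hrmin : ∀ p ∈ regA ∩ (L : Set (ℝ × ℝ)), r.2 ≤ p.2) {t : ℝ} (ht₀ : 0 < t) (ht₁ : t < 1) :
    t • r ∉ L := by
  intro ht
  obtain ⟨hr₁, hr₂⟩ := mem_regA_iff.1 hr
  have hA : t • r ∈ regA := by
    rw [mem_regA_iff]
    simp only [Prod.smul_fst, Prod.smul_snd, smul_eq_mul, abs_mul, abs_of_pos ht₀]
    constructor <;> nlinarith
  have := hrmin _ ⟨hA, ht⟩
  simp only [Prod.smul_snd, smul_eq_mul] at this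
  nlinarith

lemma eq_zero_or_one_of_smul_mem (hr : r ∈ regA)
    (hrmin : ∀ p ∈ regA ∩ (L : Set (ℝ × ℝ)), r.2 ≤ p.2) {a : ℝ} (ha₀ : 0 ≤ a) (ha₁ : a ≤ 1)
    (h : a • r ∈ L) : a = 0 ∨ a = 1 := by
  by_contra! h'
  exact smul_notMem_of_pos_of_lt_one hr hrmin (ha₀.lt_of_ne' h'.1) (ha₁.lt_of_ne h'.2) h

lemma smul_eq_floor_zsmul_of_smul_mem (hr : r ∈ regA ∩ L)
    (hrmin : ∀ p ∈ regA ∩ (L : Set (ℝ × ℝ)), r.2 ≤ p.2) {t : ℝ} (ht : t • r ∈ L) :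
    t • r = ⌊t⌋ • r := by
  have hfract : Int.fract t • r ∈ L := by
    rw [← Int.self_sub_floor, sub_smul, Int.cast_smul_eq_zsmul]
    exact sub_mem ht (zsmul_mem hr.2 _)
  have : Int.fract t = 0 :=
    (eq_zero_or_one_of_smul_mem hr.1 hrmin (Int.fract_nonneg t) (Int.fract_lt_one t).le
      hfract).resolve_right (Int.fract_lt_one t).ne
  rw [Int.fract, sub_eq_zero] at this
  nth_rw 1 [this]
  exact Int.cast_smul_eq_zsmul ℝ _ _

lemma cross_ne_zero (hr : r ∈ regA ∩ L) (hrmin : ∀ p ∈ regA ∩ (L : Set (ℝ × ℝ)), r.2 ≤ p.2)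
    (hs : s ∈ L) (hsr : ∀ k : ℤ, s ≠ k • r) : r.1 * s.2 - r.2 * s.1 ≠ 0 := by
  intro hD
  have hr₂ : r.2 ≠ 0 := (mem_regA_iff.1 hr.1).2.ne'
  have hs_eq : s = (s.2 / r.2) • r := by
    ext <;> simp only [Prod.smul_fst, Prod.smul_snd, smul_eq_mul] <;> field_simp
    linear_combination -hD
  exact hsr _ (hs_eq.trans (smul_eq_floor_zsmul_of_smul_mem hr hrmin (hs_eq ▸ hs)))

lemma smul_add_smul_ne_zsmul (hD : r.1 * s.2 - r.2 * s.1 ≠ 0) {a b : ℝ} (hb : b ≠ 0) (k : ℤ) :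
    a • r + b • s ≠ k • r := by
  intro h
  have h₁ := congrArg Prod.fst h
  have h₂ := congrArg Prod.snd h
  simp only [Prod.fst_add, Prod.snd_add, Prod.smul_fst, Prod.smul_snd, smul_eq_mul] at h₁ h₂
  rw [zsmul_eq_mul] at h₁ h₂
  refine hD ((mul_eq_zero.1 ?_).resolve_left hb)
  linear_combination r.1 * h₂ - r.2 * h₁

lemma le_snd_of_eq_smul_add_smul
    (hsmin : ∀ p ∈ regA ∩ (L : Set (ℝ × ℝ)), (∀ k : ℤ, p ≠ k • r) → s.2 ≤ p.2)
    (hD : r.1 * s.2 - r.2 * s.1 ≠ 0) {p : ℝ × ℝ} (hp : p ∈ regA ∩ (L : Set (ℝ × ℝ)))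
    {a b : ℝ} (hpab : p = a • r + b • s) (hb : b ≠ 0) : s.2 ≤ p.2 :=
  hsmin p hp (hpab ▸ smul_add_smul_ne_zsmul hD hb)

lemma smul_add_smul_notMem_of_snd_lt (hr : r ∈ regA ∩ L) (hs : s ∈ regA ∩ L)
    (hsmin : ∀ p ∈ regA ∩ (L : Set (ℝ × ℝ)), (∀ k : ℤ, p ≠ k • r) → s.2 ≤ p.2)
    (hD : r.1 * s.2 - r.2 * s.1 ≠ 0) {a b : ℝ} (ha₀ : 0 ≤ a) (ha₁ : a ≤ 1) (hb₀ : 0 < b)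
    (hb₁ : b < 1) (hw : a * r.2 + b * s.2 < s.2) : a • r + b • s ∉ L := by
  intro hwL
  obtain ⟨hr₁, hr₂⟩ := mem_regA_iff.1 hr.1
  obtain ⟨hs₁, hs₂⟩ := mem_regA_iff.1 hs.1
  have hw₂ : 0 < a * r.2 + b * s.2 :=
    add_pos_of_nonneg_of_pos (mul_nonneg ha₀ hr₂.le) (mul_pos hb₀ hs₂)
  by_cases hw₁ : |a * r.1 + b * s.1| < 1
  · have := le_snd_of_eq_smul_add_smul hsmin hD
      ⟨mem_regA_iff.2 ⟨by simpa using hw₁, by simpa using hw₂⟩, hwL⟩ rfl hb₀.ne'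
    simp only [Prod.snd_add, Prod.smul_snd, smul_eq_mul] at this
    linarith
  -- `a • r + b • s` lies outside the strip, so `r.1` and `s.1` share its sign, and subtracting
  -- it from `s`, or `r` from it, lands back in the strip.
  obtain ⟨hwr, hsw⟩ := abs_sub_lt_one_of_one_le_abs hr₁ hs₁ ha₀ ha₁ hb₀.le hb₁.le (not_lt.1 hw₁)
  rcases lt_or_ge r.2 (a * r.2 + b * s.2) with hrw | hwr₂
  · have hA : a • r + b • s - r ∈ regA := by
      rw [mem_regA_iff]
      simp only [Prod.fst_sub, Prod.snd_sub, Prod.fst_add, Prod.snd_add, Prod.smul_fst,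
        Prod.smul_snd, smul_eq_mul]
      exact ⟨hwr, by linarith⟩
    have := le_snd_of_eq_smul_add_smul (a := a - 1) hsmin hD ⟨hA, sub_mem hwL hr.2⟩
      (by module) hb₀.ne'
    simp only [Prod.snd_sub, Prod.snd_add, Prod.smul_snd, smul_eq_mul] at this
    linarith
  · have hA : s - (a • r + b • s) ∈ regA := by
      rw [mem_regA_iff]
      simp only [Prod.fst_sub, Prod.snd_sub, Prod.fst_add, Prod.snd_add, Prod.smul_fst,
        Prod.smul_snd, smul_eq_mul]
      exact ⟨hsw, by linarith⟩
    have := le_snd_of_eq_smul_add_smul (a := -a) (b := 1 - b) hsmin hD ⟨hA, sub_mem hs.2 hwL⟩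
      (by module) (sub_ne_zero.2 hb₁.ne')
    simp only [Prod.snd_sub, Prod.snd_add, Prod.smul_snd, smul_eq_mul] at this
    linarith

lemma smul_add_smul_notMem (hr : r ∈ regA ∩ L) (hs : s ∈ regA ∩ L)
    (hsmin : ∀ p ∈ regA ∩ (L : Set (ℝ × ℝ)), (∀ k : ℤ, p ≠ k • r) → s.2 ≤ p.2)
    (hlt : r.2 < s.2) (hD : r.1 * s.2 - r.2 * s.1 ≠ 0) {a b : ℝ} (ha₀ : 0 ≤ a) (ha₁ : a ≤ 1)
    (hb₀ : 0 < b) (hb₁ : b < 1) : a • r + b • s ∉ L := by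
  rcases lt_or_ge (a * r.2 + b * s.2) s.2 with hw | hw
  · exact smul_add_smul_notMem_of_snd_lt hr hs hsmin hD ha₀ ha₁ hb₀ hb₁ hw
  intro hwL
  -- the reflection `r + s - (a • r + b • s)` in the centre of the parallelogram is lower than `s`
  refine smul_add_smul_notMem_of_snd_lt hr hs hsmin hD (a := 1 - a) (b := 1 - b)
    (by linarith) (by linarith) (by linarith) (by linarith) (by linarith) ?_
  have : (1 - a) • r + (1 - b) • s = r + s - (a • r + b • s) := by module
  rw [this]
  exact sub_mem (add_mem hr.2 hs.2) hwL

lemma eq_zero_or_one_of_smul_add_smul_mem (hr : r ∈ regA ∩ L)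
    (hrmin : ∀ p ∈ regA ∩ (L : Set (ℝ × ℝ)), r.2 ≤ p.2) (hs : s ∈ regA ∩ L)
    (hsmin : ∀ p ∈ regA ∩ (L : Set (ℝ × ℝ)), (∀ k : ℤ, p ≠ k • r) → s.2 ≤ p.2)
    (hlt : r.2 < s.2) (hD : r.1 * s.2 - r.2 * s.1 ≠ 0) {a b : ℝ} (ha₀ : 0 ≤ a) (ha₁ : a ≤ 1)
    (hb₀ : 0 ≤ b) (hb₁ : b ≤ 1) (h : a • r + b • s ∈ L) : (a = 0 ∨ a = 1) ∧ (b = 0 ∨ b = 1) := by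
  have hb : b = 0 ∨ b = 1 := by
    by_contra! hb
    exact smul_add_smul_notMem hr hs hsmin hlt hD ha₀ ha₁ (hb₀.lt_of_ne' hb.1)
      (hb₁.lt_of_ne hb.2) h
  refine ⟨eq_zero_or_one_of_smul_mem hr.1 hrmin ha₀ ha₁ ?_, hb⟩
  rcases hb with rfl | rfl
  · simpa using h
  · simpa using sub_mem h hs.2

lemma exists_eq_smul_add_smul (hD : r.1 * s.2 - r.2 * s.1 ≠ 0) (p : ℝ × ℝ) :
    ∃ α β : ℝ, p = α • r + β • s :=
  ⟨(p.1 * s.2 - p.2 * s.1) / (r.1 * s.2 - r.2 * s.1),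
    (r.1 * p.2 - r.2 * p.1) / (r.1 * s.2 - r.2 * s.1), by
    ext <;> simp only [Prod.fst_add, Prod.snd_add, Prod.smul_fst, Prod.smul_snd, smul_eq_mul] <;>
      rw [div_mul_eq_mul_div, div_mul_eq_mul_div, ← add_div, eq_div_iff hD] <;> ring⟩

lemma eq_zero_or_eq_of_mem_parallelogram (hr : r ∈ regA ∩ L)
    (hrmin : ∀ p ∈ regA ∩ (L : Set (ℝ × ℝ)), r.2 ≤ p.2) (hs : s ∈ regA ∩ L)
    (hsmin : ∀ p ∈ regA ∩ (L : Set (ℝ × ℝ)), (∀ k : ℤ, p ≠ k • r) → s.2 ≤ p.2)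
    (hlt : r.2 < s.2) (hD : r.1 * s.2 - r.2 * s.1 ≠ 0) :
    ∀ p ∈ L, (∃ a b : ℝ, 0 ≤ a ∧ a ≤ 1 ∧ 0 ≤ b ∧ b ≤ 1 ∧ p = a • r + b • s) →
      p = 0 ∨ p = r ∨ p = s ∨ p = r + s := by
  rintro p hp ⟨a, b, ha₀, ha₁, hb₀, hb₁, rfl⟩
  obtain ⟨rfl | rfl, rfl | rfl⟩ :=
    eq_zero_or_one_of_smul_add_smul_mem hr hrmin hs hsmin hlt hD ha₀ ha₁ hb₀ hb₁ hp <;> simp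

lemma coe_eq_setOf_zsmul_add_zsmul (hr : r ∈ regA ∩ L)
    (hrmin : ∀ p ∈ regA ∩ (L : Set (ℝ × ℝ)), r.2 ≤ p.2) (hs : s ∈ regA ∩ L)
    (hsmin : ∀ p ∈ regA ∩ (L : Set (ℝ × ℝ)), (∀ k : ℤ, p ≠ k • r) → s.2 ≤ p.2)
    (hlt : r.2 < s.2) (hD : r.1 * s.2 - r.2 * s.1 ≠ 0) :
    (L : Set (ℝ × ℝ)) = { p : ℝ × ℝ | ∃ m n : ℤ, p = m • r + n • s } := by
  ext p
  refine ⟨fun hp => ?_, ?_⟩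
  · obtain ⟨α, β, rfl⟩ := exists_eq_smul_add_smul hD p
    have hfract : Int.fract α • r + Int.fract β • s ∈ L := by
      have : Int.fract α • r + Int.fract β • s = α • r + β • s - (⌊α⌋ • r + ⌊β⌋ • s) := by
        simp only [← Int.self_sub_floor, sub_smul, Int.cast_smul_eq_zsmul]
        abel
      rw [this]
      exact sub_mem hp (add_mem (zsmul_mem hr.2 _) (zsmul_mem hs.2 _))
    obtain ⟨hα, hβ⟩ := eq_zero_or_one_of_smul_add_smul_mem hr hrmin hs hsmin hlt hD
      (Int.fract_nonneg α) (Int.fract_lt_one α).le (Int.fract_nonneg β) (Int.fract_lt_one β).le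
      hfract
    obtain ⟨m, rfl⟩ := Int.fract_eq_zero_iff.1 (hα.resolve_right (Int.fract_lt_one α).ne)
    obtain ⟨n, rfl⟩ := Int.fract_eq_zero_iff.1 (hβ.resolve_right (Int.fract_lt_one β).ne)
    exact ⟨m, n, by simp only [Int.cast_smul_eq_zsmul]⟩
  · rintro ⟨m, n, rfl⟩
    exact add_mem (zsmul_mem hr.2 m) (zsmul_mem hs.2 n)

end

/-- The parallelogram 0, r, s, r+s contains no other lattice points, and
{r, s} is a basis of the lattice. -/
theorem parallelogram_basis (M : Matrix.SpecialLinearGroup (Fin 2) ℝ)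
    (r s : ℝ × ℝ)
    (hr : r ∈ regA ∩ lat M)
    (hrmin : ∀ p ∈ regA ∩ lat M, r.2 ≤ p.2)
    (hs : s ∈ regA ∩ lat M)
    (hsr : ∀ k : ℤ, s ≠ k • r)
    (hsmin : ∀ p ∈ regA ∩ lat M, (∀ k : ℤ, p ≠ k • r) → s.2 ≤ p.2)
    (hlt : r.2 < s.2) :
    (∀ p ∈ lat M, (∃ a b : ℝ, 0 ≤ a ∧ a ≤ 1 ∧ 0 ≤ b ∧ b ≤ 1 ∧ p = a • r + b • s) →
        p = 0 ∨ p = r ∨ p = s ∨ p = r + s) ∧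
    lat M = { p : ℝ × ℝ | ∃ m n : ℤ, p = m • r + n • s } := by
  let L := latAddSubgroup M
  have hD : r.1 * s.2 - r.2 * s.1 ≠ 0 := cross_ne_zero (L := L) hr hrmin hs.2 hsr
  exact ⟨eq_zero_or_eq_of_mem_parallelogram (L := L) hr hrmin hs hsmin hlt hD,
    coe_eq_setOf_zsmul_add_zsmul (L := L) hr hrmin hs hsmin hlt hD⟩
end
end

section
/- Let L be a lattice in ℝ², A = (-1,1) × (0,∞), and let r = (r₁,r₂) ∈ A ∩ L have minimal second coordinate in A ∩ L, and s = (s₁,s₂) ∈ (A ∩ L) \ ℤr have minimal second coordinate in (A ∩ L) \ ℤr, with s₂ > r₂. Then r₁ and s₁ have opposite signs, i.e. r₁ s₁ < 0. -/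
open Matrix Set

noncomputable section

/-- The first coordinates of r and s have opposite signs. -/
theorem opposite_signs (M : Matrix.SpecialLinearGroup (Fin 2) ℝ)
    (r s : ℝ × ℝ)
    (hr : r ∈ regA ∩ lat M)
    (hrmin : ∀ p ∈ regA ∩ lat M, r.2 ≤ p.2)
    (hs : s ∈ regA ∩ lat M)
    (hsr : ∀ k : ℤ, s ≠ k • r)
    (hsmin : ∀ p ∈ regA ∩ lat M, (∀ k : ℤ, p ≠ k • r) → s.2 ≤ p.2)
    (hlt : r.2 < s.2) :
    r.1 * s.1 < 0 := by
  by_contra h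
  push_neg at h
  obtain ⟨⟨⟨hr1a, hr1b⟩, hr2⟩, m, n, hrmn⟩ := hr
  obtain ⟨⟨⟨hs1a, hs1b⟩, hs2⟩, m', n', hsmn⟩ := hs
  simp only [Set.mem_Ioi] at hr2 hs2
  have hsub : (s.1 - r.1, s.2 - r.2) ∈ lat M := by
    refine ⟨m' - m, n' - n, ?_⟩
    rw [Prod.ext_iff] at hrmn hsmn ⊢
    push_cast
    constructor <;> [skip; skip] <;> simp only [hrmn.1, hrmn.2, hsmn.1, hsmn.2] <;> ring
  have hmem : (s.1 - r.1, s.2 - r.2) ∈ regA ∩ lat M := by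
    refine ⟨⟨⟨?_, ?_⟩, ?_⟩, hsub⟩
    · simp only; nlinarith
    · simp only; nlinarith
    · simp only [Set.mem_Ioi]; linarith
  have hnk : ∀ k : ℤ, (s.1 - r.1, s.2 - r.2) ≠ k • r := by
    intro k heq
    apply hsr (k + 1)
    rw [Prod.ext_iff] at heq ⊢
    simp only [Prod.smul_fst, Prod.smul_snd] at heq ⊢
    simp only [zsmul_eq_mul, Int.cast_add, Int.cast_one] at heq ⊢
    constructor <;> [nlinarith [heq.1]; nlinarith [heq.2]]
  have := hsmin _ hmem hnk
  simp only at this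
  linarith
end
end

section
/- For every M ∈ SL(2,ℝ), the function t ↦ F(M,t) on (0,1], where F(M,t) = min{ y > 0 : (x,y) ∈ ℤ²M, -t < x ≤ 1 - t }, takes at most three distinct values; moreover, if it takes exactly three values, then the largest value is the sum of the other two. -/
open Matrix Set

noncomputable section

/-!
Let `y₁` and `y₂` be the least heights of points of the lattice `L = ℤ²M` over the half-strips
`(-1, 0]` and `[0, 1)`. They exist because `L` is discrete and both half-strips meet `L`: either
`L` contains a vertical vector, or the `x`-coordinates of `L` are dense, and then a half-strip
missing `L` would trap infinitely many lattice points in a bounded box.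

The lowest lattice point over the window `(-t, 1 - t]` is one of these two minimal points or,
when neither lies over the window, their sum: subtracting a strip minimum from a lower point would
give a point over the other half-strip below its minimum. Hence `F(M, ·)` takes its values in
`{y₁, y₂, y₁ + y₂}` with `y₁, y₂ > 0`.
-/
open scoped MatrixGroups

-- `Fset M t` is definitionally `heights (lat M) (Ioc (-t) (1 - t))`.
def heights (L : Set (ℝ × ℝ)) (I : Set ℝ) : Set ℝ :=
  {y | 0 < y ∧ ∃ x, (x, y) ∈ L ∧ x ∈ I}

theorem isLeast_sInf_of_finite_lat_inter_of_isBounded_Iic {S : Set ℝ} (hS : S.Nonempty)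
    (hfin : ∀ B, (S ∩ Iic B).Finite) : IsLeast S (sInf S) := by
  obtain ⟨y, hy⟩ := hS
  have hbdd := (hfin y).bddBelow
  have hmin : IsLeast S (sInf (S ∩ Iic y)) := by
    have hne : (S ∩ Iic y).Nonempty := ⟨y, hy, le_refl y⟩
    refine ⟨(hne.csInf_mem (hfin y)).1, fun z hz => ?_⟩
    rcases le_total z y with hzy | hyz
    · exact csInf_le hbdd ⟨hz, hzy⟩
    · exact (csInf_le hbdd ⟨hy, le_refl y⟩).trans hyz
  rwa [hmin.csInf_eq]

theorem mem_Icc_neg_ceil_of_abs_le {m : ℤ} {r : ℝ} (h : |(m : ℝ)| ≤ r) : m ∈ Icc (-⌈r⌉) ⌈r⌉ := by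
  rw [abs_le] at h
  constructor
  · have : ((-m : ℤ) : ℝ) ≤ r := by push_cast; linarith
    linarith [Int.cast_le.1 (this.trans (Int.le_ceil r))]
  · exact Int.cast_le.1 (h.2.trans (Int.le_ceil r))

section Heights

variable {L : AddSubgroup (ℝ × ℝ)}

theorem isLeast_heights (hL : ∀ K : Set (ℝ × ℝ), Bornology.IsBounded K → (↑L ∩ K).Finite)
    {I : Set ℝ} (hI : Bornology.IsBounded I) (hne : (heights L I).Nonempty) :
    IsLeast (heights L I) (sInf (heights L I)) := by
  refine isLeast_sInf_of_finite_lat_inter_of_isBounded_Iic hne fun B => ?_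
  refine ((hL _ (hI.prod (Metric.isBounded_Icc 0 B))).image Prod.snd).subset ?_
  rintro y ⟨⟨hy, x, hp, hx⟩, hyB⟩
  exact ⟨(x, y), ⟨hp, hx, hy.le, hyB⟩, rfl⟩

theorem heights_Ioo_nonempty_of_dense
    (hL : ∀ K : Set (ℝ × ℝ), Bornology.IsBounded K → (↑L ∩ K).Finite)
    (hd : Dense (Prod.fst '' (L : Set (ℝ × ℝ)))) : (heights L (Ioo (-1) 0)).Nonempty := by
  by_contra hempty
  have hle : ∀ p ∈ L, p.1 ∈ Ioo (-1) 0 → p.2 ≤ 0 := fun p hp hx =>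
    not_lt.1 fun hy => hempty ⟨p.2, hy, p.1, hp, hx⟩
  obtain ⟨_, ⟨q, hq, rfl⟩, hq₁⟩ := hd.exists_between (show (1 / 2 : ℝ) < 1 by norm_num)
  -- Every point of `L` above `(0, 1/2)` has height in `[0, q.2]`, so there are only finitely many.
  set S := Prod.fst '' (↑L ∩ Icc (0 : ℝ) (1 / 2) ×ˢ Icc 0 q.2)
  have hS : S.Finite := (hL _ (Metric.isBounded_Icc _ _ |>.prod (Metric.isBounded_Icc _ _))).image _
  have hsub : Prod.fst '' (L : Set (ℝ × ℝ)) ∩ Ioo 0 (1 / 2) ⊆ S := by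
    rintro _ ⟨⟨p, hp, rfl⟩, hx⟩
    have hpos := hle (-p) (L.neg_mem hp) <| by
      rw [Prod.fst_neg]; constructor <;> linarith [hx.1, hx.2]
    have hbelow := hle (p - q) (L.sub_mem hp hq) <| by
      rw [Prod.fst_sub]; constructor <;> linarith [hx.1, hx.2, hq₁.1, hq₁.2]
    simp only [Prod.snd_neg, Prod.snd_sub] at hpos hbelow
    exact ⟨p, ⟨hp, ⟨hx.1.le, hx.2.le⟩, by linarith, by linarith⟩, rfl⟩
  obtain ⟨x, ⟨hxI, hxS⟩, hxL⟩ := hd.inter_open_nonempty _ (isOpen_Ioo.sdiff hS.isClosed)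
    ((Ioo_infinite (show (0 : ℝ) < 1 / 2 by norm_num)).sdiff hS).nonempty
  exact hxS (hsub ⟨hxL, hxI⟩)

theorem heights_Ioc_sub_nonempty {t : ℝ} (ht₀ : 0 < t) (ht₁ : t ≤ 1)
    (h₁ : (heights L (Ioc (-1) 0)).Nonempty) (h₂ : (heights L (Ico 0 1)).Nonempty) :
    (heights L (Ioc (-t) (1 - t))).Nonempty := by
  obtain ⟨y₁, hy₁, x₁, hp₁, hx₁, hx₁'⟩ := h₁
  obtain ⟨y₂, hy₂, x₂, hp₂, hx₂, hx₂'⟩ := h₂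
  by_cases h₁ : -t < x₁
  · exact ⟨y₁, hy₁, x₁, hp₁, h₁, by linarith⟩
  by_cases h₂ : x₂ ≤ 1 - t
  · exact ⟨y₂, hy₂, x₂, hp₂, by linarith, h₂⟩
  exact ⟨y₁ + y₂, by linarith, x₁ + x₂, L.add_mem hp₁ hp₂, by constructor <;> linarith⟩

theorem eq_or_eq_or_eq_add_of_isLeast_heights {t y₁ y₂ y : ℝ} (ht₀ : 0 < t) (ht₁ : t ≤ 1)
    (h₁ : IsLeast (heights L (Ioc (-1) 0)) y₁) (h₂ : IsLeast (heights L (Ico 0 1)) y₂)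
    (h : IsLeast (heights L (Ioc (-t) (1 - t))) y) : y = y₁ ∨ y = y₂ ∨ y = y₁ + y₂ := by
  obtain ⟨⟨hy₁, x₁, hp₁, hx₁, hx₁'⟩, hmin₁⟩ := h₁
  obtain ⟨⟨hy₂, x₂, hp₂, hx₂, hx₂'⟩, hmin₂⟩ := h₂
  obtain ⟨⟨hy, x, hp, hx, hx'⟩, hmin⟩ := h
  have hsub₁ : (x - x₁, y - y₁) ∈ L := L.sub_mem hp hp₁
  have hsub₂ : (x - x₂, y - y₂) ∈ L := L.sub_mem hp hp₂
  have le₁ : -t < x₁ → y ≤ y₁ := fun h => hmin ⟨hy₁, x₁, hp₁, h, by linarith⟩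
  have le₂ : x₂ ≤ 1 - t → y ≤ y₂ := fun h => hmin ⟨hy₂, x₂, hp₂, by linarith, h⟩
  have le₁₂ : x₁ ≤ -t → 1 - t < x₂ → y ≤ y₁ + y₂ := fun h h' =>
    hmin ⟨by linarith, x₁ + x₂, L.add_mem hp₁ hp₂, by linarith, by linarith⟩
  rcases le_or_gt x 0 with hx0 | hx0
  · have ge₁ : y₁ ≤ y := hmin₁ ⟨hy, x, hp, by linarith, hx0⟩
    have ge₁₂ : y₁ < y → x₁ ≤ -t → y₁ + y₂ ≤ y := fun h h' => by
      linarith [hmin₂ ⟨by linarith, x - x₁, hsub₁, by linarith, by linarith⟩]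
    rcases lt_or_ge (-t) x₁ with h | h
    · exact Or.inl (le_antisymm (le₁ h) ge₁)
    rcases ge₁.lt_or_eq with h' | h'
    · rcases le_or_gt x₂ (1 - t) with h'' | h''
      · linarith [le₂ h'', ge₁₂ h' h]
      · exact Or.inr (Or.inr (le_antisymm (le₁₂ h h'') (ge₁₂ h' h)))
    · exact Or.inl h'.symm
  · have ge₂ : y₂ ≤ y := hmin₂ ⟨hy, x, hp, hx0.le, by linarith⟩
    have ge₁₂ : y₂ < y → 1 - t < x₂ → y₁ + y₂ ≤ y := fun h h' => by
      linarith [hmin₁ ⟨by linarith, x - x₂, hsub₂, by linarith, by linarith⟩]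
    rcases le_or_gt x₂ (1 - t) with h | h
    · exact Or.inr (Or.inl (le_antisymm (le₂ h) ge₂))
    rcases ge₂.lt_or_eq with h' | h'
    · rcases lt_or_ge (-t) x₁ with h'' | h''
      · linarith [le₁ h'', ge₁₂ h' h]
      · exact Or.inr (Or.inr (le_antisymm (le₁₂ h'' h) (ge₁₂ h' h)))
    · exact Or.inr (Or.inl h'.symm)

end Heights

namespace SL2Lattice

variable (M : SL(2, ℝ))

theorem det_eq_one : M.1 0 0 * M.1 1 1 - M.1 0 1 * M.1 1 0 = 1 := by
  have h := M.2
  rwa [det_fin_two] at h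

def toAddSubgroup : AddSubgroup (ℝ × ℝ) where
  carrier := lat M
  zero_mem' := ⟨0, 0, by ext <;> simp⟩
  add_mem' := by
    rintro _ _ ⟨m, n, rfl⟩ ⟨m', n', rfl⟩
    exact ⟨m + m', n + n', by rw [Prod.mk_add_mk, Prod.mk.injEq]; push_cast; constructor <;> ring⟩
  neg_mem' := by
    rintro _ ⟨m, n, rfl⟩
    exact ⟨-m, -n, by rw [Prod.neg_mk, Prod.mk.injEq]; push_cast; constructor <;> ring⟩

theorem finite_lat_inter_of_isBounded {K : Set (ℝ × ℝ)} (hK : Bornology.IsBounded K) :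
    (lat M ∩ K).Finite := by
  obtain ⟨R, hR⟩ := hK.exists_norm_le
  set a := M.1 0 0
  set b := M.1 0 1
  set c := M.1 1 0
  set d := M.1 1 1
  set N := ⌈R * (|a| + |b| + |c| + |d|)⌉
  refine ((Set.finite_Icc (-N, -N) (N, N)).image fun q : ℤ × ℤ =>
    ((q.1 : ℝ) * a + q.2 * c, (q.1 : ℝ) * b + q.2 * d)).subset ?_
  rintro _ ⟨⟨m, n, rfl⟩, hpK⟩
  have hx : |(m : ℝ) * a + n * c| ≤ R := (norm_fst_le _).trans (hR _ hpK)
  have hy : |(m : ℝ) * b + n * d| ≤ R := (norm_snd_le _).trans (hR _ hpK)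
  have hR₀ : 0 ≤ R := (abs_nonneg _).trans hx
  -- Invert `M` using `det M = 1` to bound the integer coordinates.
  have hm : |(m : ℝ)| ≤ R * (|a| + |b| + |c| + |d|) := by
    have : (m : ℝ) = (m * a + n * c) * d - (m * b + n * d) * c := by
      linear_combination (-(m : ℝ)) * det_eq_one M
    rw [this]
    calc _ ≤ |(m : ℝ) * a + n * c| * |d| + |(m : ℝ) * b + n * d| * |c| := by
          rw [← abs_mul, ← abs_mul]; exact abs_sub _ _
      _ ≤ R * |d| + R * |c| := by gcongr
      _ ≤ _ := by linarith [mul_nonneg hR₀ (abs_nonneg a), mul_nonneg hR₀ (abs_nonneg b)]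
  have hn : |(n : ℝ)| ≤ R * (|a| + |b| + |c| + |d|) := by
    have : (n : ℝ) = (m * b + n * d) * a - (m * a + n * c) * b := by
      linear_combination (-(n : ℝ)) * det_eq_one M
    rw [this]
    calc _ ≤ |(m : ℝ) * b + n * d| * |a| + |(m : ℝ) * a + n * c| * |b| := by
          rw [← abs_mul, ← abs_mul]; exact abs_sub _ _
      _ ≤ R * |a| + R * |b| := by gcongr
      _ ≤ _ := by linarith [mul_nonneg hR₀ (abs_nonneg c), mul_nonneg hR₀ (abs_nonneg d)]
  obtain ⟨hm₁, hm₂⟩ := mem_Icc_neg_ceil_of_abs_le hm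
  obtain ⟨hn₁, hn₂⟩ := mem_Icc_neg_ceil_of_abs_le hn
  exact ⟨(m, n), ⟨⟨hm₁, hn₁⟩, hm₂, hn₂⟩, rfl⟩

theorem exists_vertical_or_dense_fst :
    (∃ y ≠ 0, ((0 : ℝ), y) ∈ lat M) ∨ Dense (Prod.fst '' lat M) := by
  rcases ((toAddSubgroup M).map (AddMonoidHom.fst ℝ ℝ)).dense_or_cyclic with hd | ⟨β, hβ⟩
  · rw [AddSubgroup.coe_map] at hd
    exact Or.inr hd
  have mem_map {m n : ℤ} :
      (m : ℝ) * M.1 0 0 + n * M.1 1 0 ∈ (toAddSubgroup M).map (AddMonoidHom.fst ℝ ℝ) :=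
    ⟨_, ⟨m, n, rfl⟩, rfl⟩
  obtain ⟨p, hp⟩ := AddSubgroup.mem_closure_singleton.1 (hβ ▸ @mem_map 1 0)
  obtain ⟨q, hq⟩ := AddSubgroup.mem_closure_singleton.1 (hβ ▸ @mem_map 0 1)
  simp only [Int.cast_one, Int.cast_zero, one_mul, zero_mul, add_zero, zero_add,
    zsmul_eq_mul] at hp hq
  -- The rows of `M` have first coordinates `p β` and `q β`; `q • row₀ - p • row₁` is vertical.
  refine Or.inl ⟨q * M.1 0 1 - p * M.1 1 1, fun h0 => ?_, q, -p, ?_⟩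
  · have : β * (q * M.1 0 1 - p * M.1 1 1) = -1 := by
      linear_combination M.1 0 1 * hq - M.1 1 1 * hp - det_eq_one M
    simp [h0] at this
  · ext
    · push_cast; linear_combination (q : ℝ) * hp - (p : ℝ) * hq
    · push_cast; ring

def reflect : SL(2, ℝ) :=
  ⟨!![M.1 0 0, -M.1 0 1; -M.1 1 0, M.1 1 1], by
    rw [det_fin_two_of]; linear_combination det_eq_one M⟩

theorem mem_lat_reflect {x y : ℝ} : (x, y) ∈ lat (reflect M) ↔ (-x, y) ∈ lat M := by
  simp only [lat, reflect, mem_ofPred_eq, Prod.mk.injEq, of_apply, cons_val', cons_val_zero,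
    cons_val_one, empty_val', cons_val_fin_one]
  constructor <;> rintro ⟨m, n, hx, hy⟩ <;>
    exact ⟨-m, n, by push_cast; linarith, by push_cast; linarith⟩

theorem heights_Ioc_nonempty : (heights (lat M) (Ioc (-1) 0)).Nonempty := by
  rcases exists_vertical_or_dense_fst M with ⟨y, hy, h0⟩ | hd
  · rcases hy.lt_or_gt with hy | hy
    · have h0' : -((0 : ℝ), y) ∈ lat M := (toAddSubgroup M).neg_mem h0
      exact ⟨-y, neg_pos.2 hy, 0, by simpa using h0', by norm_num⟩
    · exact ⟨y, hy, 0, h0, by norm_num⟩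
  · obtain ⟨y, hy, x, hp, hx⟩ :=
      heights_Ioo_nonempty_of_dense (L := toAddSubgroup M)
        (fun _ => finite_lat_inter_of_isBounded M) hd
    exact ⟨y, hy, x, hp, Ioo_subset_Ioc_self hx⟩

theorem heights_Ico_nonempty : (heights (lat M) (Ico 0 1)).Nonempty := by
  obtain ⟨y, hy, x, hp, hx, hx'⟩ := heights_Ioc_nonempty (reflect M)
  exact ⟨y, hy, -x, (mem_lat_reflect M).1 hp, by linarith, by linarith⟩

theorem isLeast_heights_of_nonempty {I : Set ℝ} (hI : Bornology.IsBounded I)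
    (hne : (heights (lat M) I).Nonempty) : IsLeast (heights (lat M) I) (sInf (heights (lat M) I)) :=
  isLeast_heights (L := toAddSubgroup M) (fun _ => finite_lat_inter_of_isBounded M) hI hne

theorem isLeast_F {t : ℝ} (ht₀ : 0 < t) (ht₁ : t ≤ 1) : IsLeast (Fset M t) (F M t) :=
  isLeast_heights_of_nonempty M (Metric.isBounded_Ioc _ _) <|
    heights_Ioc_sub_nonempty (L := toAddSubgroup M) ht₀ ht₁ (heights_Ioc_nonempty M)
      (heights_Ico_nonempty M)

end SL2Lattice

theorem ncard_le_three_of_subset {V : Set ℝ} {a b c : ℝ} (h : V ⊆ {a, b, c}) : V.ncard ≤ 3 := by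
  grw [Set.ncard_le_ncard h, Set.ncard_insert_le, Set.ncard_insert_le, Set.ncard_singleton]

theorem eq_add_of_subset_triple {y₁ y₂ a b c : ℝ} (h₁ : 0 < y₁) (h₂ : 0 < y₂)
    (h : ({a, b, c} : Set ℝ) ⊆ {y₁, y₂, y₁ + y₂}) (hab : a < b) (hbc : b < c) : c = a + b := by
  have ha := h (mem_insert a _)
  have hb := h (mem_insert_of_mem a (mem_insert b _))
  have hc := h (mem_insert_of_mem a (mem_insert_of_mem b rfl))
  simp only [mem_insert_iff, mem_singleton_iff] at ha hb hc
  rcases ha with rfl | rfl | rfl <;> rcases hb with rfl | rfl | rfl <;>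
    rcases hc with rfl | rfl | rfl <;> linarith

/-- For fixed M, the function t ↦ F(M,t) takes at most three values; if exactly
three, the largest is the sum of the other two. -/
theorem F_three_values (M : Matrix.SpecialLinearGroup (Fin 2) ℝ) :
    {v : ℝ | ∃ t : ℝ, 0 < t ∧ t ≤ 1 ∧ F M t = v}.ncard ≤ 3 ∧
    (∀ a b c : ℝ, {v : ℝ | ∃ t : ℝ, 0 < t ∧ t ≤ 1 ∧ F M t = v} = {a, b, c} →
      a < b → b < c → c = a + b) := by
  set y₁ := sInf (heights (lat M) (Ioc (-1) 0))
  set y₂ := sInf (heights (lat M) (Ico 0 1))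
  have h₁ : IsLeast (heights (lat M) (Ioc (-1) 0)) y₁ := SL2Lattice.isLeast_heights_of_nonempty M
    (Metric.isBounded_Ioc _ _) (SL2Lattice.heights_Ioc_nonempty M)
  have h₂ : IsLeast (heights (lat M) (Ico 0 1)) y₂ := SL2Lattice.isLeast_heights_of_nonempty M
    (Metric.isBounded_Ico _ _) (SL2Lattice.heights_Ico_nonempty M)
  have hV : {v : ℝ | ∃ t : ℝ, 0 < t ∧ t ≤ 1 ∧ F M t = v} ⊆ {y₁, y₂, y₁ + y₂} := by
    rintro _ ⟨t, ht₀, ht₁, rfl⟩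
    exact eq_or_eq_or_eq_add_of_isLeast_heights (L := SL2Lattice.toAddSubgroup M) ht₀ ht₁ h₁ h₂
      (SL2Lattice.isLeast_F M ht₀ ht₁)
  exact ⟨ncard_le_three_of_subset hV, fun a b c habc hab hbc =>
    eq_add_of_subset_triple h₁.1.1 h₂.1.1 (habc ▸ hV) hab hbc⟩
end
end

section
/- Let M ∈ SL(2,ℝ), let A = (-1,1) × (0,∞), and suppose every point of A ∩ ℤ²M lies on ℤr for the point r = (r₁,r₂) ∈ A ∩ ℤ²M of minimal second coordinate. Then F(M,t) = r₂ for all t ∈ (0,1], where F(M,t) = min{ y > 0 : (x,y) ∈ ℤ²M, -t < x ≤ 1 - t }. -/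
open Matrix Set

noncomputable section

/-! The hypothesis forces `r = (0, r₂)`. Otherwise, since the first coordinates of ℤ²M come
arbitrarily close to `0` (Dirichlet), there is a nonzero lattice vector `q` with
`|q₁| < min (|r₁|, 1 - |r₁|)` and `q₂ ≥ 0`; then either `q` lies in `A` but is not a positive
multiple of `r` (as `|q₁| < |r₁|`), or `q₂ = 0` and `r + q ≠ r` lies in `A` at height `r₂`.
Once `r₁ = 0`, the point `r` lies in every window `(-t, 1 - t] × (0, ∞)`, and these windows
are contained in `A`, so `r₂` is the least height attained. -/

lemma exists_int_mul_add_int_mul_abs_lt (a c : ℝ) {ε : ℝ} (hε : 0 < ε) :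
    ∃ m n : ℤ, (m, n) ≠ 0 ∧ |m * a + n * c| < ε := by
  rcases eq_or_ne c 0 with rfl | hc
  · exact ⟨0, 1, by simp, by simpa using hε⟩
  obtain ⟨N, hN⟩ := exists_nat_gt (|c| / ε)
  have hN₀ : 0 < N := by exact_mod_cast (div_nonneg (abs_nonneg c) hε.le).trans_lt hN
  obtain ⟨j, k, hk, -, hkj⟩ := Real.exists_int_int_abs_mul_sub_le (a / c) hN₀
  refine ⟨k, -j, by simp [hk.ne'], ?_⟩
  have hkc : (k : ℝ) * a + ((-j : ℤ) : ℝ) * c = (k * (a / c) - j) * c := by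
    field_simp
    push_cast
    ring
  calc |(k : ℝ) * a + ((-j : ℤ) : ℝ) * c| = |k * (a / c) - j| * |c| := by rw [hkc, abs_mul]
    _ ≤ 1 / (N + 1) * |c| := by gcongr
    _ < ε := by
      rw [div_lt_iff₀ hε] at hN
      rw [div_mul_eq_mul_div, one_mul, div_lt_iff₀ (by positivity)]
      nlinarith

lemma det_eq_of_specialLinearGroup (M : Matrix.SpecialLinearGroup (Fin 2) ℝ) :
    M.1 0 0 * M.1 1 1 - M.1 0 1 * M.1 1 0 = 1 := by
  rw [← Matrix.det_fin_two]
  exact M.2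

lemma exists_mem_lat_ne_zero_abs_fst_lt (M : Matrix.SpecialLinearGroup (Fin 2) ℝ) {ε : ℝ}
    (hε : 0 < ε) : ∃ q ∈ lat M, q ≠ 0 ∧ |q.1| < ε := by
  obtain ⟨m, n, hmn, hsmall⟩ := exists_int_mul_add_int_mul_abs_lt (M.1 0 0) (M.1 1 0) hε
  refine ⟨_, ⟨m, n, rfl⟩, fun h ↦ hmn ?_, hsmall⟩
  obtain ⟨h₁, h₂⟩ := Prod.mk_eq_zero.1 h
  have hdet := det_eq_of_specialLinearGroup M
  have hm : (m : ℝ) = 0 := by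
    linear_combination M.1 1 1 * h₁ - M.1 1 0 * h₂ - (m : ℝ) * hdet
  have hn : (n : ℝ) = 0 := by
    linear_combination M.1 0 0 * h₂ - M.1 0 1 * h₁ - (n : ℝ) * hdet
  simp_all

lemma neg_mem_lat {M : Matrix.SpecialLinearGroup (Fin 2) ℝ} {q : ℝ × ℝ} (hq : q ∈ lat M) :
    -q ∈ lat M := by
  obtain ⟨m, n, rfl⟩ := hq
  exact ⟨-m, -n, by ext <;> simp <;> ring⟩

lemma add_mem_lat {M : Matrix.SpecialLinearGroup (Fin 2) ℝ} {p q : ℝ × ℝ}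
    (hp : p ∈ lat M) (hq : q ∈ lat M) : p + q ∈ lat M := by
  obtain ⟨m, n, rfl⟩ := hp
  obtain ⟨m', n', rfl⟩ := hq
  exact ⟨m + m', n + n', by ext <;> simp <;> ring⟩

lemma one_le_of_zsmul_mem_regA {r : ℝ × ℝ} (hr : r ∈ regA) {k : ℤ} (hk : k • r ∈ regA) :
    1 ≤ k := by
  have h : 0 < (k : ℝ) * r.2 := by simpa [zsmul_eq_mul] using (mem_regA_iff.1 hk).2
  exact_mod_cast pos_of_mul_pos_left h (mem_regA_iff.1 hr).2.le

section AllOnLine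

variable {M : Matrix.SpecialLinearGroup (Fin 2) ℝ} {r p : ℝ × ℝ}

lemma abs_fst_le_abs_fst_of_all_on_line (hr : r ∈ regA)
    (hall : ∀ p ∈ regA ∩ lat M, ∃ k : ℤ, p = k • r) (hp : p ∈ regA ∩ lat M) :
    |r.1| ≤ |p.1| := by
  obtain ⟨k, rfl⟩ := hall p hp
  have hk : (1 : ℝ) ≤ k := by exact_mod_cast one_le_of_zsmul_mem_regA hr hp.1
  simpa [zsmul_eq_mul, abs_mul, abs_of_pos (zero_lt_one.trans_le hk)] using
    le_mul_of_one_le_left (abs_nonneg r.1) hk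

lemma eq_of_snd_eq_of_all_on_line (hr : r ∈ regA)
    (hall : ∀ p ∈ regA ∩ lat M, ∃ k : ℤ, p = k • r) (hp : p ∈ regA ∩ lat M)
    (hpr : p.2 = r.2) : p = r := by
  obtain ⟨k, rfl⟩ := hall p hp
  have hk : (k : ℝ) * r.2 = 1 * r.2 := by simpa [zsmul_eq_mul] using hpr
  have hk₁ : k = 1 := by exact_mod_cast mul_right_cancel₀ (mem_regA_iff.1 hr).2.ne' hk
  rw [hk₁, one_smul]

lemma fst_eq_zero_of_all_on_line (hr : r ∈ regA ∩ lat M)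
    (hall : ∀ p ∈ regA ∩ lat M, ∃ k : ℤ, p = k • r) : r.1 = 0 := by
  by_contra hr₁
  obtain ⟨hr₁₁, hr₂⟩ := mem_regA_iff.1 hr.1
  obtain ⟨q, hq, hq₀, hq₁⟩ :=
    exists_mem_lat_ne_zero_abs_fst_lt M (lt_min (abs_pos.2 hr₁) (sub_pos.2 hr₁₁))
  wlog hq₂ : 0 ≤ q.2 generalizing q
  · exact this (-q) (neg_mem_lat hq) (neg_ne_zero.2 hq₀) (by simpa using hq₁)
      (by rw [Prod.snd_neg]; linarith)
  obtain ⟨hqr, hqr'⟩ := lt_min_iff.1 hq₁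
  rcases hq₂.lt_or_eq with hq₂ | hq₂
  · have hqA : q ∈ regA ∩ lat M := ⟨mem_regA_iff.2 ⟨by linarith, hq₂⟩, hq⟩
    exact (abs_fst_le_abs_fst_of_all_on_line hr.1 hall hqA).not_gt hqr
  · have hrqA : r + q ∈ regA ∩ lat M := by
      refine ⟨mem_regA_iff.2 ⟨?_, by simpa [← hq₂] using hr₂⟩, add_mem_lat hr.2 hq⟩
      calc |r.1 + q.1| ≤ |r.1| + |q.1| := abs_add_le _ _
        _ < 1 := by linarith
    have := eq_of_snd_eq_of_all_on_line hr.1 hall hrqA (by simp [← hq₂])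
    exact hq₀ (by simpa using this)

end AllOnLine

lemma mem_regA_of_mem_Fset {M : Matrix.SpecialLinearGroup (Fin 2) ℝ} {t y : ℝ} (ht : 0 < t)
    (ht₁ : t ≤ 1) (hy : y ∈ Fset M t) : ∃ x, (x, y) ∈ regA ∩ lat M := by
  obtain ⟨hy₀, x, hx, hx₁, hx₂⟩ := hy
  exact ⟨x, ⟨⟨⟨by linarith, by linarith⟩, hy₀⟩, hx⟩⟩

/-- If all points of A ∩ ℤ²M lie on ℤr, then F(M,t) = r₂ for all t ∈ (0,1]. -/
theorem F_const_of_all_on_line (M : Matrix.SpecialLinearGroup (Fin 2) ℝ)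
    (r : ℝ × ℝ)
    (hr : r ∈ regA ∩ lat M)
    (hrmin : ∀ p ∈ regA ∩ lat M, r.2 ≤ p.2)
    (hall : ∀ p ∈ regA ∩ lat M, ∃ k : ℤ, p = k • r) :
    ∀ t : ℝ, 0 < t → t ≤ 1 → F M t = r.2 := by
  intro t ht ht₁
  have hr₁ : r.1 = 0 := fst_eq_zero_of_all_on_line hr hall
  have hr_mem : r.2 ∈ Fset M t :=
    ⟨hr.1.2, r.1, by simpa using hr.2, by linarith, by linarith⟩
  refine IsLeast.csInf_eq ⟨hr_mem, fun y hy ↦ ?_⟩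
  obtain ⟨x, hxy⟩ := mem_regA_of_mem_Fset ht ht₁ hy
  exact hrmin (x, y) hxy
end
end

section
/- Let α ∈ ℝ, N a positive integer, and define A_N = [[1, α],[0,1]] · [[1/N, 0],[0, N]] ∈ SL(2,ℝ). Then for each 1 ≤ k ≤ N, the gap s_{k,N} from {kα} to its next neighbor among {α},...,{Nα} on ℝ/ℤ satisfies s_{k,N} = (1/N) F(A_N, k/N). -/
open Matrix Set

noncomputable section

/-!
For `A = [[1, α], [0, 1]] · diag(1/N, N) = [[1/N, αN], [0, N]]` the lattice `ℤ²A` consists of the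
points `(m/N, N(mα + n))`. The window `-k/N < m/N ≤ 1 - k/N` says exactly that `ℓ = m + k` lies
in `(0, N]`, so the set whose infimum is `F(A, k/N)` is `N` times the set whose infimum is
`s_{k,N}`, and infima commute with scaling by `N > 0`.
-/

open Pointwise

theorem shear_mul_diagonal (α c : ℝ) :
    !![(1 : ℝ), α; 0, 1] * !![c⁻¹, 0; 0, c] = !![c⁻¹, α * c; 0, c] := by
  simp

theorem mem_lat_iff_of_apply_one_zero_eq_zero {M : Matrix.SpecialLinearGroup (Fin 2) ℝ}
    (hM : M.1 1 0 = 0) {x y : ℝ} :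
    (x, y) ∈ lat M ↔ ∃ m n : ℤ, x = m * M.1 0 0 ∧ y = m * M.1 0 1 + n * M.1 1 1 := by
  simp [lat, hM]

theorem mem_lat_iff_of_eq_shear {α N : ℝ} {A : Matrix.SpecialLinearGroup (Fin 2) ℝ}
    (hA : A.1 = !![N⁻¹, α * N; 0, N]) {x y : ℝ} :
    (x, y) ∈ lat A ↔ ∃ m n : ℤ, x = m * N⁻¹ ∧ y = N * (m * α + n) := by
  rw [mem_lat_iff_of_apply_one_zero_eq_zero (by simp [hA])]
  simp only [hA, of_apply, cons_val', cons_val_zero, cons_val_one, empty_val', cons_val_fin_one]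
  exact exists₂_congr fun m n => and_congr_right' (Eq.congr_right (by ring))

theorem neg_div_lt_mul_inv_and_le_one_sub_div_iff {N : ℝ} (hN : 0 < N) (m k : ℝ) :
    (-(k / N) < m * N⁻¹ ∧ m * N⁻¹ ≤ 1 - k / N) ↔ (0 < m + k ∧ m + k ≤ N) := by
  have hlow : -(k / N) = -k / N := (neg_div N k).symm
  have hup : 1 - k / N = (N - k) / N := by field_simp
  rw [← div_eq_mul_inv, hlow, hup, div_lt_div_iff_of_pos_right hN, div_le_div_iff_of_pos_right hN]
  constructor <;> rintro ⟨h1, h2⟩ <;> constructor <;> linarith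

theorem Fset_eq_smul_gapSet (α : ℝ) {N : ℤ} (hN : 0 < N) (k : ℤ)
    {A : Matrix.SpecialLinearGroup (Fin 2) ℝ} (hA : A.1 = !![(N : ℝ)⁻¹, α * N; 0, N]) :
    Fset A (k / N) = (N : ℝ) • gapSet α N k := by
  have hN' : (0 : ℝ) < N := by exact_mod_cast hN
  ext y
  simp only [Fset, mem_lat_iff_of_eq_shear hA, gapSet, Set.mem_smul_set, smul_eq_mul]
  constructor
  · rintro ⟨hy, x, ⟨m, n, rfl, rfl⟩, hwin⟩
    rw [neg_div_lt_mul_inv_and_le_one_sub_div_iff hN'] at hwin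
    refine ⟨m * α + n, ⟨pos_of_mul_pos_right hy hN'.le, m + k, n, ?_, ?_, by push_cast; ring⟩, rfl⟩
    · exact_mod_cast hwin.1
    · exact_mod_cast hwin.2
  · rintro ⟨v, ⟨hv, l, n, hl0, hlN, rfl⟩, rfl⟩
    refine ⟨by positivity, (l - k) * (N : ℝ)⁻¹, ⟨l - k, n, by push_cast; ring, by push_cast; ring⟩, ?_⟩
    rw [neg_div_lt_mul_inv_and_le_one_sub_div_iff hN', sub_add_cancel]
    exact ⟨by exact_mod_cast hl0, by exact_mod_cast hlN⟩

theorem gap_eq_F_general (α : ℝ) (N : ℤ) (hN : 0 < N) (k : ℤ)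
    (A : Matrix.SpecialLinearGroup (Fin 2) ℝ)
    (hA : A.1 = !![(1 : ℝ), α; 0, 1] * !![((N : ℝ))⁻¹, 0; 0, (N : ℝ)]) :
    gap α N k = (1 / (N : ℝ)) * F A ((k : ℝ) / (N : ℝ)) := by
  have hN' : (0 : ℝ) < N := by exact_mod_cast hN
  rw [shear_mul_diagonal] at hA
  rw [F, Fset_eq_smul_gapSet α hN k hA, Real.sInf_smul_of_nonneg hN'.le, smul_eq_mul, ← gap,
    one_div, inv_mul_cancel_left₀ hN'.ne']

/-- The rescaling identity s_{k,N} = (1/N) F(A_N, k/N). -/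
theorem gap_eq_F (α : ℝ) (N : ℤ) (hN : 0 < N) (k : ℤ) (hk1 : 1 ≤ k) (hkN : k ≤ N)
    (A : Matrix.SpecialLinearGroup (Fin 2) ℝ)
    (hA : A.1 = !![(1 : ℝ), α; 0, 1] * !![((N : ℝ))⁻¹, 0; 0, (N : ℝ)]) :
    gap α N k = (1 / (N : ℝ)) * F A ((k : ℝ) / (N : ℝ)) :=
  gap_eq_F_general α N hN k A hA
end
end

section
/- For any real α and positive integer N, if the gaps of {α}, {2α}, ..., {Nα} on ℝ/ℤ take exactly three distinct lengths, then the largest length equals the sum of the two smaller lengths. -/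
open Matrix Set

noncomputable section

/-!
Write `d j ∈ (0, 1]` for the least positive element of `j α + ℤ`; the gap after `{kα}` is the
least `d j` with `j` in the window `[1 - k, N - k]`, so the gaps `g₁`, `g_N` after `{α}`, `{Nα}`
are the minima of `d` over `[0, N - 1]` and `[1 - N, 0]`. Fix minimizers `j₁ ≥ 0` and `j₂ ≤ 0`
of these. Since `d i - d j` and `d i + d j` are congruent to `(i - j) α` and `(i + j) α` modulo
`ℤ`, we get `d (i - j) ≤ d i - d j` when `d j < d i`, and `d (i + j) ≤ d i + d j`. Let the gap
after `{kα}` be attained at `j ≥ 0` (the case `j ≤ 0` is symmetric). If `j₁ ≤ j`, then `j₁` lies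
in the window and the gap is `g₁`. Otherwise the gap is `g₁` or at least
`g₁ + d (j - j₁) ≥ g₁ + g_N`; in the latter case neither `j₁` nor `j₂` lies in the window, which
forces `j₁ + j₂` into it, so the gap is at most `d (j₁ + j₂) ≤ g₁ + g_N`. Hence every gap is
`g₁`, `g_N` or `g₁ + g_N`.
-/

/-- The least positive element of `j * α + ℤ`, i.e. the length of the arc from `{kα}` forward
to `{(k + j)α}`. -/
def fwdDist (α : ℝ) (j : ℤ) : ℝ := 1 - Int.fract (-(j * α))

lemma fwdDist_pos (α : ℝ) (j : ℤ) : 0 < fwdDist α j := by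
  have := Int.fract_lt_one (-(j * α))
  unfold fwdDist
  linarith

lemma exists_fwdDist_eq (α : ℝ) (j : ℤ) : ∃ n : ℤ, fwdDist α j = j * α + n :=
  ⟨⌊-(j * α)⌋ + 1, by unfold fwdDist Int.fract; push_cast; ring⟩

lemma fwdDist_le {α : ℝ} {j n : ℤ} (h : 0 < j * α + n) : fwdDist α j ≤ j * α + n := by
  have hfloor : ⌊-(j * α)⌋ < n := Int.floor_lt.mpr (by linarith)
  have hfloor' : (⌊-(j * α)⌋ : ℝ) + 1 ≤ n := by exact_mod_cast hfloor
  unfold fwdDist Int.fract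
  linarith

lemma fwdDist_add_le (α : ℝ) (i j : ℤ) : fwdDist α (i + j) ≤ fwdDist α i + fwdDist α j := by
  obtain ⟨m, hm⟩ := exists_fwdDist_eq α i
  obtain ⟨n, hn⟩ := exists_fwdDist_eq α j
  have hsum : fwdDist α i + fwdDist α j = ((i + j : ℤ) : ℝ) * α + ((m + n : ℤ) : ℝ) := by
    rw [hm, hn]; push_cast; ring
  rw [hsum]
  exact fwdDist_le (hsum ▸ add_pos (fwdDist_pos α i) (fwdDist_pos α j))

lemma fwdDist_eq_or_add_le_of_le {α : ℝ} {i j : ℤ} (h : fwdDist α i ≤ fwdDist α j) :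
    fwdDist α j = fwdDist α i ∨ fwdDist α i + fwdDist α (j - i) ≤ fwdDist α j := by
  obtain ⟨m, hm⟩ := exists_fwdDist_eq α i
  obtain ⟨n, hn⟩ := exists_fwdDist_eq α j
  have hdiff : fwdDist α j - fwdDist α i = ((j - i : ℤ) : ℝ) * α + ((n - m : ℤ) : ℝ) := by
    rw [hm, hn]; push_cast; ring
  rcases h.eq_or_lt with h | h
  · exact .inl h.symm
  · have := fwdDist_le (hdiff ▸ sub_pos.mpr h)
    exact .inr (by linarith)

section gap

variable {N k : ℤ}

lemma isLeast_gap (α : ℝ) (hk : k ∈ Icc 1 N) :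
    IsLeast (fwdDist α '' Icc (1 - k) (N - k)) (gap α N k) := by
  obtain ⟨hk1, hkN⟩ := hk
  obtain ⟨j, hj, hmin⟩ := (Finset.Icc (1 - k) (N - k)).exists_min_image (fwdDist α)
    ⟨0, by simp only [Finset.mem_Icc]; omega⟩
  simp only [Finset.mem_Icc] at hj hmin
  have hleast : IsLeast (gapSet α N k) (fwdDist α j) := by
    refine ⟨⟨fwdDist_pos α j, ?_⟩, ?_⟩
    · obtain ⟨n, hn⟩ := exists_fwdDist_eq α j
      exact ⟨j + k, n, by omega, by omega, by rw [hn]; push_cast; ring⟩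
    · rintro x ⟨hx, l, n, hl0, hl, rfl⟩
      calc fwdDist α j ≤ fwdDist α (l - k) := hmin _ ⟨by omega, by omega⟩
        _ ≤ _ := by exact_mod_cast fwdDist_le (by exact_mod_cast hx)
  rw [gap, hleast.csInf_eq]
  exact ⟨⟨j, hj, rfl⟩, by rintro _ ⟨i, hi, rfl⟩; exact hmin i hi⟩

lemma gap_le_fwdDist {α : ℝ} (hk : k ∈ Icc 1 N) {j : ℤ} (hj : j ∈ Icc (1 - k) (N - k)) :
    gap α N k ≤ fwdDist α j :=
  (isLeast_gap α hk).2 ⟨j, hj, rfl⟩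

lemma gap_pos (α : ℝ) (hk : k ∈ Icc 1 N) : 0 < gap α N k := by
  obtain ⟨j, -, hj⟩ := (isLeast_gap α hk).1
  exact hj ▸ fwdDist_pos α j

lemma gap_eq_add_of_add_le {α : ℝ} (hk : k ∈ Icc 1 N)
    (h : gap α N 1 + gap α N N ≤ gap α N k) : gap α N k = gap α N 1 + gap α N N := by
  have h1 : (1 : ℤ) ∈ Icc 1 N := ⟨le_rfl, hk.1.trans hk.2⟩
  have hN : N ∈ Icc 1 N := ⟨hk.1.trans hk.2, le_rfl⟩
  obtain ⟨j₁, hj₁, e₁⟩ := (isLeast_gap α h1).1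
  obtain ⟨j₂, hj₂, e₂⟩ := (isLeast_gap α hN).1
  have hg₁ := gap_pos α h1
  have hgN := gap_pos α hN
  have hj₁_out : j₁ ∉ Icc (1 - k) (N - k) := fun hj =>
    (gap_le_fwdDist hk hj).not_gt (by linarith)
  have hj₂_out : j₂ ∉ Icc (1 - k) (N - k) := fun hj =>
    (gap_le_fwdDist hk hj).not_gt (by linarith)
  simp only [mem_Icc, not_and_or, not_le] at hk hj₁ hj₂ hj₁_out hj₂_out
  have hsum : gap α N k ≤ fwdDist α (j₁ + j₂) := gap_le_fwdDist hk ⟨by omega, by omega⟩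
  linarith [fwdDist_add_le α j₁ j₂]

lemma gap_eq_or_eq_or_eq_add {α : ℝ} (hk : k ∈ Icc 1 N) :
    gap α N k = gap α N 1 ∨ gap α N k = gap α N N ∨
      gap α N k = gap α N 1 + gap α N N := by
  have h1 : (1 : ℤ) ∈ Icc 1 N := ⟨le_rfl, hk.1.trans hk.2⟩
  have hN : N ∈ Icc 1 N := ⟨hk.1.trans hk.2, le_rfl⟩
  suffices gap α N k = gap α N 1 ∨ gap α N k = gap α N N ∨
      gap α N 1 + gap α N N ≤ gap α N k by
    rcases this with h | h | h
    exacts [.inl h, .inr (.inl h), .inr (.inr (gap_eq_add_of_add_le hk h))]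
  obtain ⟨j, hj, e⟩ := (isLeast_gap α hk).1
  obtain ⟨j₁, hj₁, e₁⟩ := (isLeast_gap α h1).1
  obtain ⟨j₂, hj₂, e₂⟩ := (isLeast_gap α hN).1
  simp only [mem_Icc] at hk hj hj₁ hj₂
  rw [← e, ← e₁, ← e₂]
  rcases le_total 0 j with hj0 | hj0
  · have hle : fwdDist α j₁ ≤ fwdDist α j := e₁ ▸ gap_le_fwdDist h1 ⟨by omega, by omega⟩
    rcases le_or_gt j₁ j with hj₁j | hjj₁
    · exact .inl (hle.antisymm' (e ▸ gap_le_fwdDist hk ⟨by omega, by omega⟩))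
    · have hj₂_le : fwdDist α j₂ ≤ fwdDist α (j - j₁) := e₂ ▸ gap_le_fwdDist hN ⟨by omega, by omega⟩
      rcases fwdDist_eq_or_add_le_of_le hle with h | h
      exacts [.inl h, .inr (.inr (by linarith))]
  · have hle : fwdDist α j₂ ≤ fwdDist α j := e₂ ▸ gap_le_fwdDist hN ⟨by omega, by omega⟩
    rcases le_or_gt j j₂ with hjj₂ | hj₂j
    · exact .inr (.inl (hle.antisymm' (e ▸ gap_le_fwdDist hk ⟨by omega, by omega⟩)))
    · have hj₁_le : fwdDist α j₁ ≤ fwdDist α (j - j₂) := e₁ ▸ gap_le_fwdDist h1 ⟨by omega, by omega⟩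
      rcases fwdDist_eq_or_add_le_of_le hle with h | h
      exacts [.inr (.inl h), .inr (.inr (by linarith))]

end gap

theorem three_gap_sum_general (α : ℝ) (N : ℤ) :
    ∀ a b c : ℝ,
      {s : ℝ | ∃ k : ℤ, 1 ≤ k ∧ k ≤ N ∧ s = gap α N k} = {a, b, c} →
      a < b → b < c → c = a + b := by
  intro a b c hset hab hbc
  have hvalues : ∀ x ∈ ({a, b, c} : Set ℝ),
      x = gap α N 1 ∨ x = gap α N N ∨ x = gap α N 1 + gap α N N := by
    rw [← hset]
    rintro _ ⟨k, hk1, hkN, rfl⟩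
    exact gap_eq_or_eq_or_eq_add ⟨hk1, hkN⟩
  obtain ⟨k, hk1, hkN, -⟩ : a ∈ {s : ℝ | ∃ k : ℤ, 1 ≤ k ∧ k ≤ N ∧ s = gap α N k} := by
    simp [hset]
  have hg₁ := gap_pos α (k := 1) ⟨le_rfl, hk1.trans hkN⟩
  have hgN := gap_pos α (k := N) ⟨hk1.trans hkN, le_rfl⟩
  rcases hvalues a (by simp) with ha | ha | ha <;> rcases hvalues b (by simp) with hb | hb | hb <;>
    rcases hvalues c (by simp) with hc | hc | hc <;> linarith

/-- If exactly three gap lengths occur, the largest is the sum of the other two. -/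
theorem three_gap_sum (α : ℝ) (N : ℤ) (hN : 0 < N) :
    ∀ a b c : ℝ,
      {s : ℝ | ∃ k : ℤ, 1 ≤ k ∧ k ≤ N ∧ s = gap α N k} = {a, b, c} →
      a < b → b < c → c = a + b :=
  three_gap_sum_general α N
end
end

section
/- Let α be irrational, N ≥ 1, and let s_{k,N} denote the gap from {kα} to its successor among {α}, ..., {Nα} on ℝ/ℤ. Then the set { s_{k,N} : 1 ≤ k ≤ N } has at most three elements. -/
/-!
Let `p` and `q` be the times `1 ≤ j ≤ N - 1` at which `{jα}` comes closest to `0` from the right and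
from the left, at distances `δ⁺ = {pα}` and `δ⁻ = {-qα}`. The successor gap of `{kα}` is the least
`{jα}` with `1 - k ≤ j ≤ N - k`, `j ≠ 0`. Minimality of `q` gives `{-mα} - δ⁻ = {(q - m)α} ≥ δ⁺` for
`1 ≤ m < q`, and symmetrically `{mα} ≥ δ⁺ + δ⁻` for `1 ≤ m < p`. Hence the gap is the smaller of
`δ⁺` (available when `k + p ≤ N`) and `δ⁻` (available when `q < k`) if either is available, and
`δ⁺ + δ⁻`, attained at `j = p - q`, otherwise.
-/

open Matrix Set

noncomputable section

open Int

lemma Int.fract_le_add_intCast {R : Type*} [CommRing R] [LinearOrder R] [IsStrictOrderedRing R]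
    [FloorRing R] {x : R} {n : ℤ} (h : 0 < x + n) : fract x ≤ x + n := by
  have hfloor : (0 : R) ≤ ⌊x⌋ + n := by
    exact_mod_cast (floor_add_intCast x n ▸ floor_nonneg.2 h.le :)
  linarith [self_sub_floor x]

lemma Irrational.fract_intCast_mul_pos {α : ℝ} (hα : Irrational α) {j : ℤ} (hj : j ≠ 0) :
    0 < fract (j * α) :=
  fract_pos.2 fun h => (hα.intCast_mul hj).ne_int _ h

section Gaps

variable {α : ℝ} {N k : ℤ}

lemma mem_gapSet {v : ℝ} (j n : ℤ) (hv : 0 < v) (hj₁ : 1 ≤ k + j) (hj₂ : k + j ≤ N)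
    (hvj : v = j * α + n) : v ∈ gapSet α N k :=
  ⟨hv, k + j, n, by omega, hj₂, by push_cast; rw [hvj]; ring⟩

lemma mem_lowerBounds_gapSet {c : ℝ} (hc : c ≤ 1)
    (hpos : ∀ j : ℤ, 1 ≤ j → j ≤ N - k → c ≤ fract (j * α))
    (hneg : ∀ j : ℤ, 1 ≤ j → j ≤ k - 1 → c ≤ fract (-(j * α))) :
    c ∈ lowerBounds (gapSet α N k) := by
  rintro v ⟨hv, l, n, hl₁, hlN, rfl⟩
  rcases lt_trichotomy l k with hlk | rfl | hlk
  · have hx : ((l : ℝ) - k) * α = -(((k - l : ℤ) : ℝ) * α) := by push_cast; ring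
    rw [hx] at hv ⊢
    exact (hneg (k - l) (by omega) (by omega)).trans (fract_le_add_intCast hv)
  · simp only [sub_self, zero_mul, zero_add] at hv ⊢
    exact hc.trans (by exact_mod_cast (Int.cast_pos.1 hv : 0 < n))
  · have hx : ((l : ℝ) - k) * α = ((l - k : ℤ) : ℝ) * α := by push_cast; ring
    rw [hx] at hv ⊢
    exact (hpos (l - k) (by omega) (by omega)).trans (fract_le_add_intCast hv)

end Gaps

structure ClosestReturns (α : ℝ) (N p q : ℤ) : Prop where
  one_le_p : 1 ≤ p
  p_le : p ≤ N - 1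
  one_le_q : 1 ≤ q
  q_le : q ≤ N - 1
  fract_p_le : ∀ j : ℤ, 1 ≤ j → j ≤ N - 1 → fract (p * α) ≤ fract (j * α)
  fract_q_le : ∀ j : ℤ, 1 ≤ j → j ≤ N - 1 → fract (-(q * α)) ≤ fract (-(j * α))

namespace ClosestReturns

variable {α : ℝ} {N p q : ℤ}

lemma exists_of_one_lt (α : ℝ) (hN : 1 < N) : ∃ p q, ClosestReturns α N p q := by
  have hne : (Finset.Icc 1 (N - 1)).Nonempty := ⟨1, Finset.mem_Icc.2 ⟨le_rfl, by omega⟩⟩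
  obtain ⟨p, hp, hpmin⟩ := Finset.exists_min_image _ (fun j : ℤ => fract (j * α)) hne
  obtain ⟨q, hq, hqmin⟩ := Finset.exists_min_image _ (fun j : ℤ => fract (-(j * α))) hne
  rw [Finset.mem_Icc] at hp hq
  exact ⟨p, q, hp.1, hp.2, hq.1, hq.2, fun j h₁ h₂ => hpmin j (Finset.mem_Icc.2 ⟨h₁, h₂⟩),
    fun j h₁ h₂ => hqmin j (Finset.mem_Icc.2 ⟨h₁, h₂⟩)⟩

lemma neg (h : ClosestReturns α N p q) : ClosestReturns (-α) N q p := by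
  refine ⟨h.one_le_q, h.q_le, h.one_le_p, h.p_le, fun j h₁ h₂ => ?_, fun j h₁ h₂ => ?_⟩
  · simpa only [mul_neg, neg_neg] using h.fract_q_le j h₁ h₂
  · simpa only [mul_neg, neg_neg] using h.fract_p_le j h₁ h₂

lemma add_le_fract_neg (h : ClosestReturns α N p q) {m : ℤ} (hm : 1 ≤ m) (hmq : m < q) :
    fract (p * α) + fract (-(q * α)) ≤ fract (-(m * α)) := by
  have hqm : fract (-(q * α)) ≤ fract (-(m * α)) := h.fract_q_le m hm (by linarith [h.q_le])
  have hdiff : fract (((q - m : ℤ) : ℝ) * α) = fract (-(m * α)) - fract (-(q * α)) := by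
    have hlt : fract (-(m * α)) - fract (-(q * α)) < 1 := by
      linarith [fract_lt_one (-(m * α)), fract_nonneg (-(q * α))]
    refine fract_eq_iff.2 ⟨by linarith, hlt, ⌊-(m * α)⌋ - ⌊-(q * α)⌋, ?_⟩
    simp only [← self_sub_floor]
    push_cast
    ring
  linarith [h.fract_p_le (q - m) (by omega) (by linarith [h.q_le]), hdiff]

lemma add_le_fract (h : ClosestReturns α N p q) {m : ℤ} (hm : 1 ≤ m) (hmp : m < p) :
    fract (p * α) + fract (-(q * α)) ≤ fract (m * α) := by
  simpa only [mul_neg, neg_neg, add_comm] using h.neg.add_le_fract_neg hm hmp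

lemma add_le_one (hα : Irrational α) (h : ClosestReturns α N p q) :
    fract (p * α) + fract (-(q * α)) ≤ 1 := by
  have hq : fract (q * α) ≠ 0 := (hα.fract_intCast_mul_pos (by linarith [h.one_le_q])).ne'
  linarith [h.fract_p_le q h.one_le_q h.q_le, fract_neg hq]

lemma fract_p_pos (hα : Irrational α) (h : ClosestReturns α N p q) : 0 < fract (p * α) :=
  hα.fract_intCast_mul_pos (by linarith [h.one_le_p])

lemma fract_q_pos (hα : Irrational α) (h : ClosestReturns α N p q) : 0 < fract (-(q * α)) := by
  simpa only [mul_neg] using h.neg.fract_p_pos hα.neg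

variable {k : ℤ}

lemma fract_p_mem_gapSet (hα : Irrational α) (h : ClosestReturns α N p q) (hk : 1 ≤ k)
    (hkp : k + p ≤ N) : fract (p * α) ∈ gapSet α N k :=
  mem_gapSet p (-⌊p * α⌋) (h.fract_p_pos hα) (by linarith [h.one_le_p]) hkp
    (by push_cast; linarith [self_sub_floor ((p : ℝ) * α)])

lemma fract_q_mem_gapSet (hα : Irrational α) (h : ClosestReturns α N p q) (hqk : q < k)
    (hk : k ≤ N) : fract (-(q * α)) ∈ gapSet α N k :=
  mem_gapSet (-q) (-⌊-(q * α)⌋) (h.fract_q_pos hα) (by omega) (by linarith [h.one_le_q])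
    (by push_cast; linarith [self_sub_floor (-((q : ℝ) * α))])

lemma add_mem_gapSet (hα : Irrational α) (h : ClosestReturns α N p q) (hkp : N < k + p)
    (hkq : k ≤ q) : fract (p * α) + fract (-(q * α)) ∈ gapSet α N k :=
  mem_gapSet (p - q) (-⌊p * α⌋ - ⌊-(q * α)⌋)
    (add_pos (h.fract_p_pos hα) (h.fract_q_pos hα)) (by linarith [h.q_le]) (by linarith [h.p_le])
    (by push_cast; linarith [self_sub_floor ((p : ℝ) * α), self_sub_floor (-((q : ℝ) * α))])

lemma gap_eq_min (hα : Irrational α) (h : ClosestReturns α N p q) (hk : 1 ≤ k)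
    (hkp : k + p ≤ N) (hqk : q < k) : gap α N k = min (fract (p * α)) (fract (-(q * α))) := by
  refine IsLeast.csInf_eq ⟨?_, mem_lowerBounds_gapSet ?_ ?_ ?_⟩
  · rcases min_choice (fract (p * α)) (fract (-(q * α))) with hmin | hmin <;> rw [hmin]
    exacts [h.fract_p_mem_gapSet hα hk hkp, h.fract_q_mem_gapSet hα hqk (by linarith [h.one_le_p])]
  · exact (min_le_left _ _).trans (fract_lt_one _).le
  · exact fun j h₁ h₂ => (min_le_left _ _).trans (h.fract_p_le j h₁ (by linarith [h.one_le_p]))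
  · exact fun j h₁ h₂ => (min_le_right _ _).trans (h.fract_q_le j h₁ (by linarith [h.one_le_p]))

lemma gap_eq_fract_p (hα : Irrational α) (h : ClosestReturns α N p q) (hk : 1 ≤ k)
    (hkp : k + p ≤ N) (hkq : k ≤ q) : gap α N k = fract (p * α) := by
  refine IsLeast.csInf_eq ⟨h.fract_p_mem_gapSet hα hk hkp, mem_lowerBounds_gapSet
    (fract_lt_one _).le (fun j h₁ h₂ => h.fract_p_le j h₁ (by linarith [h.one_le_p]))
    (fun j h₁ h₂ => ?_)⟩
  linarith [h.add_le_fract_neg h₁ (by omega : j < q), fract_nonneg (-(q * α))]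

lemma gap_eq_fract_q (hα : Irrational α) (h : ClosestReturns α N p q) (hk : k ≤ N)
    (hkp : N < k + p) (hqk : q < k) : gap α N k = fract (-(q * α)) := by
  refine IsLeast.csInf_eq ⟨h.fract_q_mem_gapSet hα hqk hk, mem_lowerBounds_gapSet
    (fract_lt_one _).le (fun j h₁ h₂ => ?_)
    (fun j h₁ h₂ => h.fract_q_le j h₁ (by linarith [h.q_le]))⟩
  linarith [h.add_le_fract h₁ (by omega : j < p), fract_nonneg (p * α)]

lemma gap_eq_add (hα : Irrational α) (h : ClosestReturns α N p q) (hkp : N < k + p)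
    (hkq : k ≤ q) : gap α N k = fract (p * α) + fract (-(q * α)) :=
  IsLeast.csInf_eq ⟨h.add_mem_gapSet hα hkp hkq, mem_lowerBounds_gapSet (h.add_le_one hα)
    (fun j h₁ h₂ => h.add_le_fract h₁ (by omega)) (fun j h₁ h₂ => h.add_le_fract_neg h₁ (by omega))⟩

lemma gap_mem (hα : Irrational α) (h : ClosestReturns α N p q) (hk₁ : 1 ≤ k) (hk₂ : k ≤ N) :
    gap α N k ∈ ({fract (p * α), fract (-(q * α)), fract (p * α) + fract (-(q * α))} : Finset ℝ) := by
  rcases le_or_gt (k + p) N with hkp | hkp <;> rcases lt_or_ge q k with hqk | hqk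
  · rw [h.gap_eq_min hα hk₁ hkp hqk]
    rcases min_choice (fract (p * α)) (fract (-(q * α))) with hmin | hmin <;> simp [hmin]
  · simp [h.gap_eq_fract_p hα hk₁ hkp hqk]
  · simp [h.gap_eq_fract_q hα hk₂ hkp hqk]
  · simp [h.gap_eq_add hα hkp hqk]

end ClosestReturns

/-- Three gap theorem for irrational α, in terms of successor gaps. -/
theorem three_gap_irrational (α : ℝ) (hα : Irrational α) (N : ℤ) (hN : 1 ≤ N) :
    {s : ℝ | ∃ k : ℤ, 1 ≤ k ∧ k ≤ N ∧ s = gap α N k}.ncard ≤ 3 := by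
  obtain rfl | hN := hN.eq_or_lt
  · have hsub : {s : ℝ | ∃ k : ℤ, 1 ≤ k ∧ k ≤ 1 ∧ s = gap α 1 k} ⊆ {gap α 1 1} := by
      rintro s ⟨k, hk₁, hk₂, rfl⟩
      rw [le_antisymm hk₂ hk₁]
      rfl
    exact (Set.ncard_le_ncard hsub (Set.finite_singleton _)).trans (by simp)
  obtain ⟨p, q, h⟩ := ClosestReturns.exists_of_one_lt α hN
  have hsub : {s : ℝ | ∃ k : ℤ, 1 ≤ k ∧ k ≤ N ∧ s = gap α N k} ⊆
      ↑({fract (p * α), fract (-(q * α)), fract (p * α) + fract (-(q * α))} : Finset ℝ) := by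
    rintro s ⟨k, hk₁, hk₂, rfl⟩
    exact h.gap_mem hα hk₁ hk₂
  calc _ ≤ _ := Set.ncard_le_ncard hsub (Finset.finite_toSet _)
    _ ≤ 3 := by rw [Set.ncard_coe_finset]; exact Finset.card_le_three
end
end
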